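/- arXiv:math/0302301 — 5 statements merged into one kernel-verified Lean document; each statement's English description precedes it below -/
import Mathlib

section
/- For every permutation w in A_{n+1}, del_A(w) equals the number of almost-left-to-right minima of w^{-1}, where i (with i ≥ 3) is an almost-left-to-right minimum of a permutation σ if |{ j ≤ i : σ(j) < σ(i) }| ≤ 1. -/
open scoped Classical
open Finset

noncomputable section

/-- `sgen n i` is the adjacent transposition `s_i = (i, i+1)` (1-indexed) in `S_n`,
realized as a permutation of `Fin n` (positions `1,…,n` correspond to `0,…,n-1`). -/
def sgen (n i : ℕ) : Equiv.Perm (Fin n) :=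
  if h : 1 ≤ i ∧ i < n then Equiv.swap ⟨i - 1, by omega⟩ ⟨i, h.2⟩ else 1

/-- `agen n i` is the generator `a_i = s_1 s_{i+1}` of the alternating group. -/
def agen (n i : ℕ) : Equiv.Perm (Fin n) := sgen n 1 * sgen n (i + 1)

/-- The descending product `s_j s_{j-1} ⋯ s_k` (equal to `1` when `k = j+1`). -/
def dProd (n j k : ℕ) : Equiv.Perm (Fin n) :=
  ((List.range (j + 1 - k)).map fun t => sgen n (j - t)).prod

/-- The descending product `a_j a_{j-1} ⋯ a_k` (equal to `1` when `k = j+1`). -/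
def aDProd (n j k : ℕ) : Equiv.Perm (Fin n) :=
  ((List.range (j + 1 - k)).map fun t => agen n (j - t)).prod

/-- `R^S_j = {1, s_j, s_j s_{j-1}, …, s_j s_{j-1} ⋯ s_1}`. -/
def RS (n j : ℕ) : Set (Equiv.Perm (Fin n)) :=
  { w | ∃ k, 1 ≤ k ∧ k ≤ j + 1 ∧ w = dProd n j k }

/-- `R^S_j` as a finite set. -/
def RSfin (n j : ℕ) : Finset (Equiv.Perm (Fin n)) :=
  (Finset.range (j + 1)).image fun k => dProd n j (k + 1)

/-- `R^A_j = {1, a_j, a_j a_{j-1}, …, a_j ⋯ a_2, a_j ⋯ a_2 a_1, a_j ⋯ a_2 a_1⁻¹}`. -/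
def RA (n j : ℕ) : Set (Equiv.Perm (Fin n)) :=
  { v | (∃ k, 1 ≤ k ∧ k ≤ j + 1 ∧ v = aDProd n j k) ∨ v = aDProd n j 2 * (agen n 1)⁻¹ }

/-- The element of `R^A_j` with code `k`:
`k = 0` encodes `a_j ⋯ a_2 a_1⁻¹`, and `k ≥ 1` encodes `a_j ⋯ a_k`. -/
def elemA (n j k : ℕ) : Equiv.Perm (Fin n) :=
  if k = 0 then aDProd n j 2 * (agen n 1)⁻¹ else aDProd n j k

/-- `k : Fin (n-1) → ℕ` codes the S-canonical presentation of `w`: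
the `j`-th factor is `s_{j+1} s_j ⋯ s_{k j} ∈ R^S_{j+1}` (`k j = j + 2` codes `1`). -/
def isCanonS (n : ℕ) (w : Equiv.Perm (Fin n)) (k : Fin (n - 1) → ℕ) : Prop :=
  (∀ j : Fin (n - 1), 1 ≤ k j ∧ k j ≤ (j : ℕ) + 2) ∧
    (List.ofFn fun j : Fin (n - 1) => dProd n ((j : ℕ) + 1) (k j)).prod = w

/-- The code of the S-canonical presentation of `w` (it is unique when it exists). -/
def kvecS (n : ℕ) (w : Equiv.Perm (Fin n)) : Fin (n - 1) → ℕ :=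
  if h : ∃ k, isCanonS n w k then h.choose else fun _ => 0

/-- `del_S w` : the number of occurrences of `s_1` in the S-canonical presentation of `w`
(the factor from `R^S_{j+1}` contains `s_1` exactly when its code is `1`). -/
def delS (n : ℕ) (w : Equiv.Perm (Fin n)) : ℕ :=
  (Finset.univ.filter fun j : Fin (n - 1) => kvecS n w j = 1).card

/-- `k : Fin (m-2) → ℕ` codes the A-canonical presentation of `v ∈ A_m`:
the `j`-th factor is `elemA m (j+1) (k j) ∈ R^A_{j+1}`. -/
def isCanonA (m : ℕ) (v : Equiv.Perm (Fin m)) (k : Fin (m - 2) → ℕ) : Prop :=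
  (∀ j : Fin (m - 2), k j ≤ (j : ℕ) + 2) ∧
    (List.ofFn fun j : Fin (m - 2) => elemA m ((j : ℕ) + 1) (k j)).prod = v

/-- The code of the A-canonical presentation of `v`. -/
def kvecA (m : ℕ) (v : Equiv.Perm (Fin m)) : Fin (m - 2) → ℕ :=
  if h : ∃ k, isCanonA m v k then h.choose else fun _ => 0

/-- `del_A v` : the number of occurrences of `a_1^{±1}` in the A-canonical presentation
(codes `0` and `1` are the two factors containing `a_1^{±1}`). -/
def delA (m : ℕ) (v : Equiv.Perm (Fin m)) : ℕ :=
  (Finset.univ.filter fun j : Fin (m - 2) => kvecA m v j ≤ 1).card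

/-- `ℓ_A v` : the total number of letters `a_i^{±1}` in the A-canonical presentation:
the factor of `R^A_{j+1}` with code `0` has `j+1` letters, the one with code `k ≥ 1`
has `j + 2 - k` letters. -/
def lenA (m : ℕ) (v : Equiv.Perm (Fin m)) : ℕ :=
  ∑ j : Fin (m - 2), if kvecA m v j = 0 then (j : ℕ) + 1 else (j : ℕ) + 2 - kvecA m v j

/-- `ℓ_S w` : the number of inversions of `w`. -/
def invS {n : ℕ} (w : Equiv.Perm (Fin n)) : ℕ :=
  (Finset.univ.filter fun p : Fin n × Fin n => p.1 < p.2 ∧ w p.2 < w p.1).card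

/-- The (1-indexed) descent set `Des_S(σ) = {1 ≤ i ≤ n-1 : σ(i) > σ(i+1)}`. -/
def Des1 {n : ℕ} (σ : Equiv.Perm (Fin n)) : Finset ℕ :=
  (Finset.Ico 1 n).filter fun i => ∃ h : i < n, σ ⟨i, h⟩ < σ ⟨i - 1, by omega⟩

/-- `rmaj_{S_m}(σ) = ∑_{i ∈ Des_S(σ)} (m - i)`. -/
def rmaj1 {n : ℕ} (m : ℕ) (σ : Equiv.Perm (Fin n)) : ℕ := ∑ i ∈ Des1 σ, (m - i)

/-- `maj_S(σ) = ∑_{i ∈ Des_S(σ)} i`. -/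
def maj1 {n : ℕ} (σ : Equiv.Perm (Fin n)) : ℕ := ∑ i ∈ Des1 σ, i

/-- `Del_S(σ)` : the (1-indexed) positions `1 < i ≤ n` which are left-to-right minima:
`σ(i) < σ(j)` for all `j < i`. -/
def DelSet {n : ℕ} (σ : Equiv.Perm (Fin n)) : Finset ℕ :=
  (Finset.Icc 2 n).filter fun i =>
    ∃ h : i - 1 < n, ∀ j : Fin n, (j : ℕ) < i - 1 → σ ⟨i - 1, h⟩ < σ j

/-- `del_S(σ)` computed combinatorially: the number of left-to-right minima of `σ`
other than the first position. -/
def delC {n : ℕ} (σ : Equiv.Perm (Fin n)) : ℕ := (DelSet σ).card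

/-- The Gaussian (q-)binomial coefficient, via the q-Pascal recursion. -/
def qbinom {R : Type*} [CommRing R] (q : R) : ℕ → ℕ → R
  | _, 0 => 1
  | 0, _ + 1 => 0
  | n + 1, k + 1 => qbinom q n k + q ^ (k + 1) * qbinom q n (k + 1)

end

namespace Stmt7

lemma sgen_def (m i : ℕ) (h1 : 1 ≤ i) (h2 : i < m) :
    sgen m i = Equiv.swap ⟨i-1, by omega⟩ ⟨i, h2⟩ := by
  simp [sgen, h1, h2]

lemma sgen_inv (m i : ℕ) : (sgen m i)⁻¹ = sgen m i := by
  unfold sgen; split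
  · exact Equiv.swap_inv _ _
  · rfl

lemma sgen_apply (m i : ℕ) (h1 : 1 ≤ i) (h2 : i < m) (x : Fin m) :
    sgen m i x = if (x:ℕ) = i - 1 then ⟨i, h2⟩ else if (x:ℕ) = i then ⟨i-1, by omega⟩ else x := by
  rw [sgen_def m i h1 h2, Equiv.swap_apply_def]
  split
  · next hh => simp [hh, Fin.ext_iff]
  · next hh =>
    have : ¬ ((x:ℕ) = i - 1) := fun hc => hh (Fin.ext hc)
    simp only [this, if_false]
    split
    · next hh2 => simp [hh2, Fin.ext_iff]
    · next hh2 =>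
      have : ¬ ((x:ℕ) = i) := fun hc => hh2 (Fin.ext hc)
      simp [this]

lemma sgen_apply_ne (m i : ℕ) (x : Fin m) (hx1 : (x:ℕ) ≠ i - 1) (hx2 : (x:ℕ) ≠ i) :
    sgen m i x = x := by
  unfold sgen
  split
  · apply Equiv.swap_apply_of_ne_of_ne
    · simp only [ne_eq, Fin.ext_iff]; exact hx1
    · simp only [ne_eq, Fin.ext_iff]; exact hx2
  · rfl

lemma dProd_peel (n j k : ℕ) (h : k ≤ j) :
    dProd n j k = dProd n j (k+1) * sgen n k := by
  unfold dProd
  have h1 : j + 1 - k = (j - k) + 1 := by omega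
  have h2 : j + 1 - (k+1) = j - k := by omega
  have h3 : j - (j - k) = k := by omega
  rw [h1, List.range_succ, List.map_append, List.prod_append, h2]
  simp [h3]

lemma dProd_top (n j : ℕ) : dProd n j (j+1) = 1 := by
  unfold dProd; simp

lemma dProd_apply (m : ℕ) : ∀ (d J k : ℕ), J - k = d → ∀ (hJ : J < m), k ≤ J → ∀ x : Fin m,
    (dProd m J (k+1)) x = if (x:ℕ) = k then ⟨J, hJ⟩
      else if (x:ℕ) ≤ J ∧ k < (x:ℕ) then ⟨(x:ℕ)-1, by omega⟩ else x := by
  intro d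
  induction d with
  | zero =>
    intro J k hd hJ hk x
    have : k = J := by omega
    subst this
    rw [dProd_top]
    simp only [Equiv.Perm.coe_one, id_eq]
    split
    · next hh => exact Fin.ext hh
    · next hh =>
      split
      · next hh2 => omega
      · rfl
  | succ d ih =>
    intro J k hd hJ hk x
    rw [dProd_peel m J (k+1) (by omega)]
    simp only [Equiv.Perm.mul_apply]
    rw [sgen_apply m (k+1) (by omega) (by omega) x]
    have hstep : J - (k+1) = d := by omega
    split_ifs with h0 h1 <;>
      rw [ih J (k+1) hstep hJ (by omega)] <;> clear ih <;>
      split_ifs <;> simp_all [Fin.ext_iff] <;> omega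

lemma aDProd_peel (n j k : ℕ) (h : k ≤ j) :
    aDProd n j k = aDProd n j (k+1) * agen n k := by
  unfold aDProd
  have h1 : j + 1 - k = (j - k) + 1 := by omega
  have h2 : j + 1 - (k+1) = j - k := by omega
  have h3 : j - (j - k) = k := by omega
  rw [h1, List.range_succ, List.map_append, List.prod_append, h2]
  simp [h3]

lemma aDProd_top (n j : ℕ) : aDProd n j (j+1) = 1 := by
  unfold aDProd; simp

lemma sgen_one_sq (m : ℕ) : sgen m 1 * sgen m 1 = 1 := by
  unfold sgen
  split
  · exact Equiv.swap_mul_self _ _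
  · simp

lemma commute_sgen_one (m i : ℕ) (hi : 3 ≤ i) : Commute (sgen m 1) (sgen m i) := by
  rcases le_or_gt m 1 with hm | hm
  · have : sgen m 1 = 1 := by unfold sgen; rw [dif_neg]; omega
    rw [this]; exact Commute.one_left _
  rcases le_or_gt m i with hmi | hmi
  · have : sgen m i = 1 := by unfold sgen; rw [dif_neg]; omega
    rw [this]; exact Commute.one_right _
  apply Equiv.Perm.Disjoint.commute
  intro x
  by_cases hx : (x:ℕ) ≤ 1
  · right
    exact sgen_apply_ne m i x (by omega) (by omega)
  · left
    exact sgen_apply_ne m 1 x (by omega) (by omega)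

lemma commute_sgen_one_dProd (m J K : ℕ) (hK : 3 ≤ K) :
    Commute (sgen m 1) (dProd m J K) := by
  apply Commute.list_prod_right
  intro y hy
  simp only [List.mem_map, List.mem_range] at hy
  obtain ⟨t, ht, rfl⟩ := hy
  exact commute_sgen_one m (J - t) (by omega)

lemma aDProd_formula (m t : ℕ) : ∀ (d k : ℕ), k + d = t + 2 → 1 ≤ k → t + 2 < m →
    aDProd m (t+1) k = (sgen m 1)^(t+2-k) * dProd m (t+2) (k+1) := by
  intro d
  induction d with
  | zero =>
    intro k hd hk hm
    have : k = t + 2 := by omega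
    subst this
    have h1 : t + 2 = (t+1) + 1 := by omega
    rw [h1, aDProd_top]
    have h2 : t + 1 + 1 - (t + 1 + 1) = 0 := by omega
    rw [h2, pow_zero, one_mul, ← h1]
    have h3 : (t+2) + 1 = (t+2) + 1 := rfl
    rw [show t + 2 + 1 = (t+2) + 1 from rfl, dProd_top]
  | succ d ih =>
    intro k hd hk hm
    have hkt : k ≤ t + 1 := by omega
    rw [aDProd_peel m (t+1) k hkt, ih (k+1) (by omega) (by omega) hm]
    unfold agen
    have hcomm : Commute (sgen m 1) (dProd m (t+2) (k+2)) :=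
      commute_sgen_one_dProd m (t+2) (k+2) (by omega)
    calc (sgen m 1)^(t+2-(k+1)) * dProd m (t+2) (k+1+1) * (sgen m 1 * sgen m (k+1))
        = (sgen m 1)^(t+2-(k+1)) * (dProd m (t+2) (k+2) * sgen m 1) * sgen m (k+1) := by
          group
      _ = (sgen m 1)^(t+2-(k+1)) * (sgen m 1 * dProd m (t+2) (k+2)) * sgen m (k+1) := by
          rw [hcomm.eq]
      _ = ((sgen m 1)^(t+2-(k+1)) * sgen m 1) * (dProd m (t+2) (k+2) * sgen m (k+1)) := by
          group
      _ = (sgen m 1)^(t+2-k) * dProd m (t+2) (k+1) := by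
          rw [← pow_succ, ← dProd_peel m (t+2) (k+1) (by omega)]
          congr 2
          omega

lemma sgen_one_pow_two (m : ℕ) : (sgen m 1)^2 = 1 := by
  rw [pow_two, sgen_one_sq]

lemma elemA_formula (m t k : ℕ) (hk : k ≤ t + 2) (ht : t + 2 < m) :
    elemA m (t+1) k = (sgen m 1)^(t+2-k) * dProd m (t+2) (k+1) := by
  unfold elemA
  by_cases h0 : k = 0
  · subst h0
    rw [if_pos rfl, aDProd_formula m t t 2 (by omega) (by omega) ht]
    unfold agen
    rw [mul_inv_rev, sgen_inv, sgen_inv]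
    have h2 : sgen m (1+1) = sgen m 2 := by norm_num
    rw [h2]
    calc (sgen m 1)^(t+2-2) * dProd m (t+2) 3 * (sgen m 2 * sgen m 1)
        = (sgen m 1)^t * ((dProd m (t+2) 3 * sgen m 2) * sgen m 1) := by
          have : t + 2 - 2 = t := by omega
          rw [this]; group
      _ = (sgen m 1)^t * (dProd m (t+2) 2 * sgen m 1) := by
          rw [← dProd_peel m (t+2) 2 (by omega)]
      _ = (sgen m 1)^t * dProd m (t+2) 1 := by
          rw [← dProd_peel m (t+2) 1 (by omega)]
      _ = (sgen m 1)^(t+2-0) * dProd m (t+2) (0+1) := by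
          have h4 : t + 2 - 0 = t + 2 := by omega
          rw [h4, pow_add, sgen_one_pow_two, mul_one]
  · rw [if_neg h0]
    exact aDProd_formula m t (t+2-k) k (by omega) (by omega) ht

lemma sgen_one_pow_apply (m e : ℕ) (y : Fin m) (hy : 2 ≤ (y:ℕ)) : ((sgen m 1)^e) y = y := by
  induction e with
  | zero => simp
  | succ e ih =>
    rw [pow_succ, Equiv.Perm.mul_apply, sgen_apply_ne m 1 y (by omega) (by omega), ih]

lemma elemA_fix (m t k : ℕ) (hk : k ≤ t + 2) (ht : t + 2 < m) (i : Fin m)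
    (hi : t + 3 ≤ (i:ℕ)) : elemA m (t+1) k i = i := by
  rw [elemA_formula m t k hk ht, Equiv.Perm.mul_apply,
    dProd_apply m (t+2-k) (t+2) k (by omega) ht (by omega) i]
  rw [if_neg (by omega), if_neg (by omega)]
  exact sgen_one_pow_apply m _ i (by omega)

lemma elemA_apply_k (m t k : ℕ) (hk : k ≤ t + 2) (ht : t + 2 < m) :
    elemA m (t+1) k ⟨k, by omega⟩ = ⟨t+2, ht⟩ := by
  rw [elemA_formula m t k hk ht, Equiv.Perm.mul_apply,
    dProd_apply m (t+2-k) (t+2) k (by omega) ht (by omega)]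
  rw [if_pos rfl]
  exact sgen_one_pow_apply m _ _ (by norm_num)

lemma elemA_inv_top (m t k : ℕ) (hk : k ≤ t + 2) (ht : t + 2 < m) :
    (elemA m (t+1) k)⁻¹ ⟨t+2, ht⟩ = ⟨k, by omega⟩ := by
  rw [Equiv.Perm.inv_def, Equiv.symm_apply_eq]
  exact (elemA_apply_k m t k hk ht).symm

lemma sgen_mem_or (m i : ℕ) (h1 : 1 ≤ i) (h2 : i < m) :
    Equiv.Perm.sign (sgen m i) = -1 := by
  rw [sgen_def m i h1 h2]
  apply Equiv.Perm.sign_swap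
  simp [Fin.ext_iff]; omega

lemma agen_even (m i : ℕ) (h1 : 1 ≤ i) (h2 : i + 1 < m) :
    agen m i ∈ alternatingGroup (Fin m) := by
  rw [Equiv.Perm.mem_alternatingGroup]
  unfold agen
  rw [map_mul, sgen_mem_or m 1 (by omega) (by omega), sgen_mem_or m (i+1) (by omega) h2]
  decide

lemma elemA_even (m t k : ℕ) (hk : k ≤ t + 2) (ht : t + 2 < m) :
    elemA m (t+1) k ∈ alternatingGroup (Fin m) := by
  have haD : ∀ K, 1 ≤ K → aDProd m (t+1) K ∈ alternatingGroup (Fin m) := by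
    intro K hK
    apply Subgroup.list_prod_mem
    intro x hx
    simp only [List.mem_map, List.mem_range] at hx
    obtain ⟨τ, hτ, rfl⟩ := hx
    exact agen_even m (t+1-τ) (by omega) (by omega)
  unfold elemA
  by_cases h0 : k = 0
  · rw [if_pos h0]
    exact Subgroup.mul_mem _ (haD 2 (by omega)) (Subgroup.inv_mem _ (agen_even m 1 (by omega) (by omega)))
  · rw [if_neg h0]
    exact haD k (by omega)

def pcount (m : ℕ) (σ : Equiv.Perm (Fin m)) (i : Fin m) : ℕ :=
  (Finset.univ.filter fun q => q ≤ i ∧ σ q < σ i).card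

lemma card_filter_lt (m : ℕ) (σ : Equiv.Perm (Fin m)) (c : Fin m) :
    (Finset.univ.filter fun q => σ q < c).card = (c:ℕ) := by
  have : (Finset.univ.filter fun q => σ q < c) = (Finset.Iio c).map σ⁻¹.toEmbedding := by
    ext q
    simp [Equiv.symm_apply_eq, Equiv.Perm.inv_def]
  rw [this, Finset.card_map, Fin.card_Iio]

lemma pcount_le (m : ℕ) (σ : Equiv.Perm (Fin m)) (i : Fin m) : pcount m σ i ≤ (σ i : ℕ) := by
  rw [← card_filter_lt m σ (σ i)]
  refine Finset.card_le_card fun q hq => ?_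
  simp only [Finset.mem_filter] at hq ⊢
  exact ⟨hq.1, hq.2.2⟩

lemma sgen_one_eq_one (m : ℕ) (hm : ¬ 1 < m) : sgen m 1 = 1 := by
  unfold sgen; rw [dif_neg]; omega

lemma sgen_one_le_one (m : ℕ) (y : Fin m) (hy : (y:ℕ) ≤ 1) : ((sgen m 1) y : ℕ) ≤ 1 := by
  by_cases hm : 1 < m
  · rw [sgen_apply m 1 le_rfl hm y]
    split_ifs <;> simp_all
  · rw [sgen_one_eq_one m hm]; simpa using hy

lemma sgen_one_fix (m : ℕ) (y : Fin m) (hy : 2 ≤ (y:ℕ)) : (sgen m 1) y = y :=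
  sgen_apply_ne m 1 y (by omega) (by omega)

lemma swap_pred (m : ℕ) (τ : Equiv.Perm (Fin m)) (i : Fin m) :
    pcount m (sgen m 1 * τ) i ≤ 1 ↔ pcount m τ i ≤ 1 := by
  by_cases hv : 2 ≤ (τ i : ℕ)
  · have hfix : (sgen m 1 * τ) i = τ i := by
      simp only [Equiv.Perm.mul_apply]; exact sgen_one_fix m _ hv
    have : pcount m (sgen m 1 * τ) i = pcount m τ i := by
      unfold pcount
      congr 1
      apply Finset.filter_congr
      intro q _
      simp only [Equiv.Perm.mul_apply]
      rw [sgen_one_fix m (τ i) hv]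
      apply and_congr_right
      intro _
      by_cases hq : 2 ≤ (τ q : ℕ)
      · rw [sgen_one_fix m (τ q) hq]
      · have h1 : ((sgen m 1) (τ q) : ℕ) ≤ 1 := sgen_one_le_one m _ (by omega)
        constructor
        · intro _; exact Fin.lt_def.mpr (by omega)
        · intro _; exact Fin.lt_def.mpr (by omega)
    rw [this]
  · constructor
    · intro _
      exact le_trans (pcount_le m τ i) (by omega)
    · intro _
      refine le_trans (pcount_le m _ i) ?_
      simp only [Equiv.Perm.mul_apply]
      exact sgen_one_le_one m _ (by omega)

lemma pow_pred (m e : ℕ) (τ : Equiv.Perm (Fin m)) (i : Fin m) :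
    pcount m ((sgen m 1)^e * τ) i ≤ 1 ↔ pcount m τ i ≤ 1 := by
  induction e with
  | zero => rw [pow_zero, one_mul]
  | succ e ih =>
    rw [pow_succ', mul_assoc, swap_pred, ih]

lemma dProd_mono (m t k : ℕ) (ht : t + 2 < m) (hk : k ≤ t + 2) (a b : Fin m)
    (ha : (a:ℕ) ≤ t + 2) (hb : (b:ℕ) ≤ t + 2) (hak : (a:ℕ) ≠ k) (hbk : (b:ℕ) ≠ k)
    (hab : a < b) : dProd m (t+2) (k+1) a < dProd m (t+2) (k+1) b := by
  rw [dProd_apply m (t+2-k) (t+2) k (by omega) ht (by omega) a,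
    dProd_apply m (t+2-k) (t+2) k (by omega) ht (by omega) b]
  have hab' : (a:ℕ) < (b:ℕ) := hab
  rw [if_neg hak, if_neg hbk]
  split_ifs <;> (apply Fin.lt_def.mpr) <;> simp <;> omega

lemma step_pred (m t k : ℕ) (ht : t + 2 < m) (hk : k ≤ t + 2) (σ : Equiv.Perm (Fin m))
    (hσfix : ∀ q : Fin m, t + 3 ≤ (q:ℕ) → σ q = q) (hσtop : (σ ⟨t+2, ht⟩ : ℕ) = k)
    (i : Fin m) (hi : (i:ℕ) ≤ t + 1) :
    pcount m (elemA m (t+1) k * σ) i ≤ 1 ↔ pcount m σ i ≤ 1 := by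
  have hbdd : ∀ p : Fin m, (p:ℕ) ≤ t + 1 → (σ p : ℕ) ≤ t + 2 ∧ (σ p : ℕ) ≠ k := by
    intro p hp
    constructor
    · by_contra hc
      have h1 : σ (σ p) = σ p := hσfix (σ p) (by omega)
      have h2 := σ.injective h1
      rw [h2] at hc
      omega
    · intro hc
      have h1 : σ p = σ ⟨t+2, ht⟩ := Fin.ext (by omega)
      have h2 := σ.injective h1
      have h3 := congrArg Fin.val h2
      simp only [Fin.val_mk] at h3
      omega
  rw [elemA_formula m t k hk ht, mul_assoc, pow_pred]
  have heq : pcount m (dProd m (t+2) (k+1) * σ) i = pcount m σ i := by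
    unfold pcount
    congr 1
    apply Finset.filter_congr
    intro q _
    apply and_congr_right
    intro hqi
    have hq : (q:ℕ) ≤ t + 1 := le_trans (Fin.le_def.mp hqi) hi
    obtain ⟨hq1, hq2⟩ := hbdd q hq
    obtain ⟨hi1, hi2⟩ := hbdd i hi
    simp only [Equiv.Perm.mul_apply]
    constructor
    · intro hlt
      rcases lt_trichotomy (σ q) (σ i) with h | h | h
      · exact h
      · rw [h] at hlt; exact absurd hlt (lt_irrefl _)
      · exact absurd hlt (not_lt.mpr (le_of_lt (dProd_mono m t k ht hk _ _ hi1 hq1 hi2 hq2 h)))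
    · intro hlt
      exact dProd_mono m t k ht hk _ _ hq1 hi1 hq2 hi2 hlt
  rw [heq]

lemma top_pred (m t k : ℕ) (ht : t + 2 < m) (hk : k ≤ t + 2) (σ : Equiv.Perm (Fin m))
    (hσfix : ∀ q : Fin m, t + 3 ≤ (q:ℕ) → σ q = q) (hσtop : (σ ⟨t+2, ht⟩ : ℕ) = k) :
    pcount m σ ⟨t+2, ht⟩ = k := by
  unfold pcount
  have : (Finset.univ.filter fun q => q ≤ (⟨t+2, ht⟩ : Fin m) ∧ σ q < σ ⟨t+2, ht⟩)
      = Finset.univ.filter fun q => σ q < σ ⟨t+2, ht⟩ := by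
    apply Finset.filter_congr
    intro q _
    constructor
    · exact And.right
    · intro hlt
      refine ⟨?_, hlt⟩
      rw [Fin.le_def]
      show (q:ℕ) ≤ t + 2
      by_contra hc
      have hfq : σ q = q := hσfix q (by omega)
      have h1 := Fin.lt_def.mp hlt
      rw [hfq, hσtop] at h1
      omega
  rw [this, card_filter_lt, hσtop]

lemma inv_fix {m : ℕ} (x : Equiv.Perm (Fin m)) (i : Fin m) (h : x i = i) : x⁻¹ i = i := by
  exact (Equiv.Perm.eq_inv_iff_eq.mpr h).symm

def Pfx (m : ℕ) (c : ℕ → ℕ) (t : ℕ) : Equiv.Perm (Fin m) :=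
  ((List.range t).map fun j => elemA m (j+1) (c j)).prod

lemma Pfx_zero (m : ℕ) (c : ℕ → ℕ) : Pfx m c 0 = 1 := by unfold Pfx; simp

lemma Pfx_succ (m : ℕ) (c : ℕ → ℕ) (t : ℕ) :
    Pfx m c (t+1) = Pfx m c t * elemA m (t+1) (c t) := by
  unfold Pfx
  rw [List.range_succ, List.map_append, List.prod_append]
  simp

lemma Pfx_congr (m : ℕ) (c c' : ℕ → ℕ) (t : ℕ) (h : ∀ j < t, c j = c' j) :
    Pfx m c t = Pfx m c' t := by
  unfold Pfx
  congr 1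
  apply List.map_congr_left
  intro j hj
  rw [h j (List.mem_range.mp hj)]

lemma Pfx_fix (m : ℕ) (c : ℕ → ℕ) : ∀ t, (∀ j < t, c j ≤ j + 2) → t + 1 < m →
    ∀ i : Fin m, t + 2 ≤ (i:ℕ) → Pfx m c t i = i := by
  intro t
  induction t with
  | zero => intro _ _ i _; rw [Pfx_zero]; rfl
  | succ t ih =>
    intro hbd hm i hi
    rw [Pfx_succ, Equiv.Perm.mul_apply,
      elemA_fix m t (c t) (hbd t (by omega)) (by omega) i (by omega)]
    exact ih (fun j hj => hbd j (by omega)) (by omega) i (by omega)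

lemma Pfx_even (m : ℕ) (c : ℕ → ℕ) : ∀ t, (∀ j < t, c j ≤ j + 2) → t + 1 < m →
    Pfx m c t ∈ alternatingGroup (Fin m) := by
  intro t
  induction t with
  | zero => intro _ _; rw [Pfx_zero]; exact Subgroup.one_mem _
  | succ t ih =>
    intro hbd hm
    rw [Pfx_succ]
    exact Subgroup.mul_mem _ (ih (fun j hj => hbd j (by omega)) (by omega))
      (elemA_even m t (c t) (hbd t (by omega)) (by omega))

lemma Pfx_inv_top (m : ℕ) (c : ℕ → ℕ) (t : ℕ) (hbd : ∀ j < t + 1, c j ≤ j + 2)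
    (hm : t + 2 < m) :
    (Pfx m c (t+1))⁻¹ ⟨t+2, hm⟩ = ⟨c t, by have := hbd t (by omega); omega⟩ := by
  rw [Pfx_succ, mul_inv_rev, Equiv.Perm.mul_apply]
  have h1 : (Pfx m c t)⁻¹ ⟨t+2, hm⟩ = ⟨t+2, hm⟩ :=
    inv_fix _ _ (Pfx_fix m c t (fun j hj => hbd j (by omega)) (by omega) _ (by simp))
  rw [h1]
  exact elemA_inv_top m t (c t) (hbd t (by omega)) hm

lemma Pfx_unique (m : ℕ) : ∀ t, t + 1 < m → ∀ c c' : ℕ → ℕ, (∀ j < t, c j ≤ j + 2) →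
    (∀ j < t, c' j ≤ j + 2) → Pfx m c t = Pfx m c' t → ∀ j < t, c j = c' j := by
  intro t
  induction t with
  | zero => intro _ _ _ _ _ _ j hj; omega
  | succ t ih =>
    intro hm c c' hbd hbd' heq
    have htop : c t = c' t := by
      have h1 := Pfx_inv_top m c t hbd (by omega)
      have h2 := Pfx_inv_top m c' t hbd' (by omega)
      rw [heq] at h1
      rw [h1] at h2
      have := congrArg Fin.val h2
      simpa using this
    have hcancel : Pfx m c t = Pfx m c' t := by
      have h3 : Pfx m c t * elemA m (t+1) (c t) = Pfx m c' t * elemA m (t+1) (c t) := by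
        rw [← Pfx_succ, heq, Pfx_succ, htop]
      exact mul_right_cancel h3
    intro j hj
    rcases Nat.lt_succ_iff_lt_or_eq.mp hj with h | h
    · exact ih (by omega) c c' (fun j hj => hbd j (by omega)) (fun j hj => hbd' j (by omega))
        hcancel j h
    · subst h; exact htop

lemma eq_one_of_even_fix (m : ℕ) (hm : 2 ≤ m) (v : Equiv.Perm (Fin m))
    (hv : v ∈ alternatingGroup (Fin m)) (hfix : ∀ i : Fin m, 2 ≤ (i:ℕ) → v i = i) :
    v = 1 := by
  set z0 : Fin m := ⟨0, by omega⟩ with hz0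
  set z1 : Fin m := ⟨1, by omega⟩ with hz1
  have hsmall : ∀ p : Fin m, (p:ℕ) ≤ 1 → (v p : ℕ) ≤ 1 := by
    intro p hp
    by_contra hc
    have h1 : v⁻¹ (v p) = v p := inv_fix v (v p) (hfix (v p) (by omega))
    rw [Equiv.Perm.inv_def, Equiv.symm_apply_apply] at h1
    have := congrArg Fin.val h1
    omega
  have hv0 := hsmall z0 (by simp [hz0])
  have hv1 := hsmall z1 (by simp [hz1])
  have hne : v z1 ≠ v z0 := fun hc => by
    have := congrArg Fin.val (v.injective hc); simp [hz0, hz1] at this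
  by_cases h0 : (v z0 : ℕ) = 0
  · have h1 : (v z1 : ℕ) = 1 := by
      by_contra hc
      exact hne (Fin.ext (by omega))
    ext i
    rcases Nat.lt_or_ge (i:ℕ) 2 with hi | hi
    · simp only [Equiv.Perm.coe_one, id_eq]
      interval_cases hival : (i:ℕ)
      · have hieq : i = z0 := Fin.ext (by simp [hz0, hival])
        rw [hieq]; exact congrArg Fin.val (Fin.ext h0 : v z0 = z0)
      · have hieq : i = z1 := Fin.ext (by simp [hz1, hival])
        rw [hieq]; exact congrArg Fin.val (Fin.ext h1 : v z1 = z1)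
    · rw [hfix i hi]; rfl
  · exfalso
    have h0' : (v z0 : ℕ) = 1 := by omega
    have h1' : (v z1 : ℕ) = 0 := by
      by_contra hc
      exact hne (Fin.ext (by omega))
    have hz01 : z0 ≠ z1 := fun hc => by
      have := congrArg Fin.val hc; simp [hz0, hz1] at this
    have hveq : v = Equiv.swap z0 z1 := by
      ext i
      rcases Nat.lt_or_ge (i:ℕ) 2 with hi | hi
      · interval_cases hival : (i:ℕ)
        · have hieq : i = z0 := Fin.ext (by simp [hz0, hival])
          rw [hieq, Equiv.swap_apply_left]
          exact h0'
        · have hieq : i = z1 := Fin.ext (by simp [hz1, hival])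
          rw [hieq, Equiv.swap_apply_right]
          exact h1'
      · rw [hfix i hi, Equiv.swap_apply_of_ne_of_ne]
        · intro hc; have := congrArg Fin.val hc; simp [hz0] at this; omega
        · intro hc; have := congrArg Fin.val hc; simp [hz1] at this; omega
    have hsign := Equiv.Perm.mem_alternatingGroup.mp hv
    rw [hveq, Equiv.Perm.sign_swap hz01] at hsign
    exact absurd hsign (by decide)

lemma exists_code (m : ℕ) (hm2 : 2 ≤ m) : ∀ t, t + 2 ≤ m → ∀ v : Equiv.Perm (Fin m),
    v ∈ alternatingGroup (Fin m) → (∀ i : Fin m, t + 2 ≤ (i:ℕ) → v i = i) →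
    ∃ c : ℕ → ℕ, (∀ j, c j ≤ j + 2) ∧ Pfx m c t = v ∧
      ((Finset.range t).filter fun j => c j ≤ 1).card
        = (Finset.univ.filter fun i : Fin m =>
            2 ≤ (i:ℕ) ∧ (i:ℕ) ≤ t + 1 ∧ pcount m v⁻¹ i ≤ 1).card := by
  intro t
  induction t with
  | zero =>
    intro _ v hvA hvfix
    refine ⟨fun j => j + 2, fun j => le_rfl, ?_, ?_⟩
    · rw [Pfx_zero]
      exact (eq_one_of_even_fix m hm2 v hvA hvfix).symm
    · rw [Finset.range_zero, Finset.filter_empty, Finset.card_empty]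
      symm
      rw [Finset.card_eq_zero, Finset.filter_eq_empty_iff]
      intro i _
      push_neg
      intro h1 h2
      omega
  | succ t ih =>
    intro hm v hvA hvfix
    have ht2 : t + 2 < m := by omega
    have hvfix3 : ∀ i : Fin m, t + 3 ≤ (i:ℕ) → v i = i := fun i hi => hvfix i (by omega)
    have hivfix : ∀ i : Fin m, t + 3 ≤ (i:ℕ) → v⁻¹ i = i := fun i hi => inv_fix v i (hvfix3 i hi)
    set k : ℕ := (v⁻¹ ⟨t+2, ht2⟩ : ℕ) with hkdef
    have hk : k ≤ t + 2 := by
      by_contra hc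
      have h2 : v⁻¹ (v⁻¹ ⟨t+2, ht2⟩) = v⁻¹ ⟨t+2, ht2⟩ := hivfix _ (by omega)
      have h3 := (Equiv.injective v⁻¹) h2
      have h4 := congrArg Fin.val h3
      simp only [Fin.val_mk] at h4
      omega
    set x := elemA m (t+1) k with hxdef
    set u := v * x⁻¹ with hudef
    have hxfix : ∀ i : Fin m, t + 3 ≤ (i:ℕ) → x i = i := fun i hi => elemA_fix m t k hk ht2 i hi
    have hxinvtop : x⁻¹ ⟨t+2, ht2⟩ = ⟨k, by omega⟩ := elemA_inv_top m t k hk ht2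
    have huA : u ∈ alternatingGroup (Fin m) :=
      Subgroup.mul_mem _ hvA (Subgroup.inv_mem _ (elemA_even m t k hk ht2))
    have hufix : ∀ i : Fin m, t + 2 ≤ (i:ℕ) → u i = i := by
      intro i hi
      rcases Nat.eq_or_lt_of_le hi with he | hlt
      · have hieq : i = ⟨t+2, ht2⟩ := Fin.ext (by simp only [Fin.val_mk]; omega)
        rw [hieq, hudef, Equiv.Perm.mul_apply, hxinvtop]
        have heq2 : (⟨k, by omega⟩ : Fin m) = v⁻¹ ⟨t+2, ht2⟩ := Fin.ext (by simp [hkdef])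
        rw [heq2, Equiv.Perm.inv_def, Equiv.apply_symm_apply]
      · rw [hudef, Equiv.Perm.mul_apply, inv_fix x i (hxfix i (by omega)), hvfix3 i (by omega)]
    obtain ⟨c, hcbd, hcPfx, hccount⟩ := ih (by omega) u huA hufix
    refine ⟨fun j => if j = t then k else c j, ?_, ?_, ?_⟩
    · intro j
      by_cases hj : j = t
      · subst hj
        show (if j = j then k else c j) ≤ j + 2
        rw [if_pos rfl]; exact hk
      · show (if j = t then k else c j) ≤ j + 2
        rw [if_neg hj]; exact hcbd j
    · rw [Pfx_succ]
      have h1 : Pfx m (fun j => if j = t then k else c j) t = Pfx m c t :=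
        Pfx_congr _ _ _ _ (fun j hj => by simp [Nat.ne_of_lt hj])
      have hct : (if t = t then k else c t) = k := if_pos rfl
      rw [h1, hcPfx, hct, ← hxdef, hudef]
      group
    · have hstep : ∀ i : Fin m, 2 ≤ (i:ℕ) → (i:ℕ) ≤ t + 1 →
          (pcount m u⁻¹ i ≤ 1 ↔ pcount m v⁻¹ i ≤ 1) := by
        intro i h2 h3
        have huinv : u⁻¹ = x * v⁻¹ := by rw [hudef, mul_inv_rev, inv_inv]
        rw [huinv, hxdef]
        exact step_pred m t k ht2 hk v⁻¹ hivfix (by simp [hkdef]) i h3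
      have htop : pcount m v⁻¹ ⟨t+2, ht2⟩ = k :=
        top_pred m t k ht2 hk v⁻¹ hivfix (by simp [hkdef])
      have hLHS : ((Finset.range (t+1)).filter fun j => (if j = t then k else c j) ≤ 1).card
          = ((Finset.range t).filter fun j => c j ≤ 1).card + (if k ≤ 1 then 1 else 0) := by
        rw [Finset.range_add_one, Finset.filter_insert]
        have hfeq : ((Finset.range t).filter fun j => (if j = t then k else c j) ≤ 1)
            = (Finset.range t).filter fun j => c j ≤ 1 := by
          apply Finset.filter_congr
          intro j hj
          simp only [Finset.mem_range] at hj
          simp [Nat.ne_of_lt hj]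
        have hct : (if t = t then k else c t) = k := if_pos rfl
        rw [hct]
        split_ifs with hk1
        · rw [Finset.card_insert_of_notMem (fun hc => by simp at hc), hfeq]
        · rw [hfeq, Nat.add_zero]
      have hsplit : (Finset.univ.filter fun i : Fin m =>
            2 ≤ (i:ℕ) ∧ (i:ℕ) ≤ t + 2 ∧ pcount m v⁻¹ i ≤ 1).card
          = (Finset.univ.filter fun i : Fin m =>
            2 ≤ (i:ℕ) ∧ (i:ℕ) ≤ t + 1 ∧ pcount m v⁻¹ i ≤ 1).card + (if k ≤ 1 then 1 else 0) := by
        have hS : (Finset.univ.filter fun i : Fin m =>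
              2 ≤ (i:ℕ) ∧ (i:ℕ) ≤ t + 2 ∧ pcount m v⁻¹ i ≤ 1)
            = (Finset.univ.filter fun i : Fin m =>
              2 ≤ (i:ℕ) ∧ (i:ℕ) ≤ t + 1 ∧ pcount m v⁻¹ i ≤ 1) ∪
              (Finset.univ.filter fun i : Fin m => i = ⟨t+2,ht2⟩ ∧ pcount m v⁻¹ i ≤ 1) := by
          rw [← Finset.filter_or]
          apply Finset.filter_congr
          intro i _
          constructor
          · rintro ⟨h1,h2,h3⟩
            by_cases hc : (i:ℕ) ≤ t+1
            · left; exact ⟨h1,hc,h3⟩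
            · right; exact ⟨Fin.ext (by simp; omega), h3⟩
          · rintro (⟨h1,h2,h3⟩ | ⟨h1,h2⟩)
            · exact ⟨h1, by omega, h3⟩
            · have h4 := congrArg Fin.val h1
              simp only [Fin.val_mk] at h4
              exact ⟨by omega, by omega, h2⟩
        rw [hS, Finset.card_union_of_disjoint]
        · congr 1
          by_cases hk1 : k ≤ 1
          · rw [if_pos hk1]
            have hsingle : (Finset.univ.filter fun i : Fin m =>
                i = ⟨t+2,ht2⟩ ∧ pcount m v⁻¹ i ≤ 1) = {⟨t+2,ht2⟩} := by
              ext i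
              simp only [Finset.mem_filter, Finset.mem_univ, true_and, Finset.mem_singleton]
              constructor
              · exact And.left
              · intro h; subst h; exact ⟨rfl, by rw [htop]; exact hk1⟩
            rw [hsingle, Finset.card_singleton]
          · rw [if_neg hk1, Finset.card_eq_zero, Finset.filter_eq_empty_iff]
            rintro i _ ⟨rfl, hp⟩
            rw [htop] at hp
            exact hk1 hp
        · rw [Finset.disjoint_left]
          intro i h1 h2
          simp only [Finset.mem_filter, Finset.mem_univ, true_and] at h1 h2
          have h4 := congrArg Fin.val h2.1
          simp only [Fin.val_mk] at h4
          omega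
      have hmid : (Finset.univ.filter fun i : Fin m =>
            2 ≤ (i:ℕ) ∧ (i:ℕ) ≤ t + 1 ∧ pcount m u⁻¹ i ≤ 1)
          = (Finset.univ.filter fun i : Fin m =>
            2 ≤ (i:ℕ) ∧ (i:ℕ) ≤ t + 1 ∧ pcount m v⁻¹ i ≤ 1) := by
        apply Finset.filter_congr
        intro i _
        constructor
        · rintro ⟨h1,h2,h3⟩; exact ⟨h1,h2,(hstep i h1 h2).mp h3⟩
        · rintro ⟨h1,h2,h3⟩; exact ⟨h1,h2,(hstep i h1 h2).mpr h3⟩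
      have hgoalrw : (t + 1 : ℕ) + 1 = t + 2 := rfl
      rw [hLHS, hccount, hmid, hgoalrw, hsplit]

lemma hofn_lemma (m : ℕ) (K : Fin (m-2) → ℕ) :
    (List.ofFn fun j : Fin (m - 2) => elemA m ((j : ℕ) + 1) (K j)).prod
      = Pfx m (fun j => if h : j < m - 2 then K ⟨j, h⟩ else j + 2) (m - 2) := by
  unfold Pfx
  congr 1
  apply List.ext_getElem
  · simp
  · intro i h1 h2
    simp only [List.getElem_ofFn, List.getElem_map, List.getElem_range]
    have hi : i < m - 2 := by simpa using h1
    rw [dif_pos hi]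

end Stmt7

open Stmt7

/-- For `w ∈ A_{n+1}`, `del_A(w)` equals the number of almost-left-to-right minima of
`w⁻¹` : positions `i ≥ 3` (1-indexed; here `(i : ℕ) ≥ 2` 0-indexed) such that at most one
entry weakly to the left is smaller. -/
theorem stmt7 (n : ℕ) (w : Equiv.Perm (Fin (n + 1)))
    (hw : w ∈ alternatingGroup (Fin (n + 1))) :
    delA (n + 1) w =
      (Finset.univ.filter fun i : Fin (n + 1) =>
        2 ≤ (i : ℕ) ∧
          (Finset.univ.filter fun j : Fin (n + 1) => j ≤ i ∧ w⁻¹ j < w⁻¹ i).card ≤ 1).card := by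
  rcases Nat.eq_zero_or_pos n with hn | hn
  · subst hn
    have h1 : delA 1 w = 0 := by
      unfold delA
      apply Finset.card_eq_zero.mpr
      apply Finset.eq_empty_of_forall_notMem
      intro j _
      exact absurd j.isLt (by norm_num)
    rw [h1]
    symm
    rw [Finset.card_eq_zero, Finset.filter_eq_empty_iff]
    intro i _
    push_neg
    intro h2
    exact absurd h2 (by have := i.isLt; omega)
  · have hm2 : 2 ≤ n + 1 := by omega
    have hfix : ∀ i : Fin (n + 1), (n + 1 - 2) + 2 ≤ (i:ℕ) → w i = i := by
      intro i hi
      exact absurd i.isLt (by omega)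
    obtain ⟨c, hcbd, hcPfx, hccount⟩ := exists_code (n+1) hm2 (n+1-2) (by omega) w hw hfix
    have hex : ∃ K, isCanonA (n+1) w K := by
      refine ⟨fun j => c j, fun j => hcbd j, ?_⟩
      rw [hofn_lemma, ← hcPfx]
      apply Pfx_congr
      intro j hj
      rw [dif_pos hj]
    have hcanon : isCanonA (n+1) w (kvecA (n+1) w) := by
      unfold kvecA
      rw [dif_pos hex]
      exact hex.choose_spec
    have hkv : ∀ j : Fin (n + 1 - 2), kvecA (n+1) w j = c j := by
      obtain ⟨hbd, hprod⟩ := hcanon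
      have hPfxK : Pfx (n+1) (fun j => if h : j < n + 1 - 2 then kvecA (n+1) w ⟨j, h⟩ else j + 2)
          (n+1-2) = w := by
        rw [← hofn_lemma]; exact hprod
      have huniq := Pfx_unique (n+1) (n+1-2) (by omega)
        (fun j => if h : j < n + 1 - 2 then kvecA (n+1) w ⟨j, h⟩ else j + 2) c
        (fun j hj => by simp only [dif_pos hj]; exact hbd ⟨j, hj⟩)
        (fun j _ => hcbd j)
        (by rw [hPfxK, hcPfx])
      intro j
      have h5 := huniq j j.isLt
      simp only [dif_pos j.isLt] at h5
      simpa using h5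
    unfold delA
    have hcard1 : (Finset.univ.filter fun j : Fin (n+1-2) => kvecA (n+1) w j ≤ 1).card
        = ((Finset.range (n+1-2)).filter fun j => c j ≤ 1).card := by
      apply Finset.card_bij (fun (a : Fin (n+1-2)) _ => (a : ℕ))
      · intro a ha
        simp only [Finset.mem_filter, Finset.mem_univ, true_and] at ha
        simp only [Finset.mem_filter, Finset.mem_range]
        refine ⟨a.isLt, ?_⟩
        rw [hkv a] at ha
        simpa using ha
      · intro a _ b _ hab
        exact Fin.ext hab
      · intro b hb
        simp only [Finset.mem_filter, Finset.mem_range] at hb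
        refine ⟨⟨b, hb.1⟩, ?_, rfl⟩
        simp only [Finset.mem_filter, Finset.mem_univ, true_and]
        rw [hkv ⟨b, hb.1⟩]
        simpa using hb.2
    rw [hcard1, hccount]
    congr 1
    apply Finset.filter_congr
    intro i _
    constructor
    · rintro ⟨h1, _, h3⟩
      exact ⟨h1, h3⟩
    · rintro ⟨h1, h3⟩
      exact ⟨h1, by have := i.isLt; omega, h3⟩
end

section
/- The generating function of the pair (length, delent number) over S_n factors as: Σ_{σ ∈ S_n} q^{ℓ_S(σ)} t^{del_S(σ)} = (1+qt)(1+q+q²t)···(1+q+...+q^{n-2}+q^{n-1}t). -/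
open scoped Classical
open Finset

/-!
Every permutation of `Fin (n + 1)` arises exactly once by inserting the largest value into a
permutation `e` of `Fin n` at some position `p`. The new value is inverted with exactly the
`n - p` entries after it, and it does not change which old entries are left-to-right minima.
Since `delC` ignores the first position, it grows by one exactly when `p = 0`: then the old first
entry moves to the second position and becomes counted. So passing from `n` to `n + 1`
multiplies the generating function by `∑_p q ^ (n - p) t ^ [p = 0] = 1 + q + ⋯ + q ^ (n - 1) + q ^ n t`.
-/

open Equiv

theorem Fin.card_filter_univ_succAbove {n : ℕ} (p : Fin (n + 1)) (P : Fin (n + 1) → Prop)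
    [DecidablePred P] : #{x | P x} = (if P p then 1 else 0) + #{i | P (p.succAbove i)} := by
  rw [Fin.univ_succAbove n p, filter_cons, apply_ite Finset.card, card_cons, filter_map, card_map]
  split_ifs <;> simp only [Function.comp_def, add_comm, zero_add] <;> congr

section InsertMax

variable {n : ℕ}

/-- `e` with the new largest value `Fin.last n` inserted at position `p`. -/
def insertMax (e : Perm (Fin n)) (p : Fin (n + 1)) : Perm (Fin (n + 1)) :=
  ((finSuccEquiv' p).trans (Equiv.optionCongr e)).trans (finSuccEquiv' (Fin.last n)).symm

@[simp]
lemma insertMax_apply_self (e : Perm (Fin n)) (p : Fin (n + 1)) :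
    insertMax e p p = Fin.last n := by
  simp [insertMax]

@[simp]
lemma insertMax_apply_succAbove (e : Perm (Fin n)) (p : Fin (n + 1)) (i : Fin n) :
    insertMax e p (p.succAbove i) = (e i).castSucc := by
  simp [insertMax, Fin.succAbove_last]

lemma insertMax_injective :
    Function.Injective fun ep : Perm (Fin n) × Fin (n + 1) => insertMax ep.1 ep.2 := by
  rintro ⟨e, p⟩ ⟨f, r⟩ h
  simp only at h
  obtain rfl : p = r := (insertMax e p).injective <| by
    rw [insertMax_apply_self, h, insertMax_apply_self]
  obtain rfl : e = f := by
    ext i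
    simpa [Fin.val_eq_val] using congr($h (p.succAbove i))
  rfl

lemma insertMax_bijective :
    Function.Bijective fun ep : Perm (Fin n) × Fin (n + 1) => insertMax ep.1 ep.2 := by
  rw [Fintype.bijective_iff_injective_and_card]
  refine ⟨insertMax_injective, ?_⟩
  simp [Fintype.card_perm, Nat.factorial_succ, mul_comm]

lemma invS_eq_sum (σ : Perm (Fin n)) : invS σ = ∑ a, #{b | a < b ∧ σ b < σ a} := by
  rw [invS, card_filter, Fintype.sum_prod_type]
  simp only [card_filter]

lemma invS_insertMax (e : Perm (Fin n)) (p : Fin (n + 1)) :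
    invS (insertMax e p) = invS e + (n - p) := by
  rw [invS_eq_sum, invS_eq_sum, Fin.sum_univ_succAbove _ p, add_comm]
  congr 1
  · refine Fintype.sum_congr _ _ fun i => ?_
    rw [Fin.card_filter_univ_succAbove p]
    simp [Fin.succAbove_lt_succAbove_iff, Fin.le_last]
  · have hlt : ∀ b, p < b → insertMax e p b < Fin.last n := fun b hb => by
      obtain ⟨j, rfl⟩ := Fin.exists_succAbove_eq hb.ne'
      simp [Fin.castSucc_lt_last]
    calc #{b | p < b ∧ insertMax e p b < insertMax e p p} = #(Ioi p) := by
          congr 1; ext b; simp +contextual [hlt]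
      _ = n - p := by simp

/-- Unlike `DelSet σ`, this counts the position `0`, which is always a left-to-right minimum. -/
def ltrMins (σ : Perm (Fin n)) : Finset (Fin n) := {r | ∀ j < r, σ r < σ j}

lemma card_ltrMins (σ : Perm (Fin (n + 1))) : #(ltrMins σ) = delC σ + 1 := by
  rw [ltrMins, Fin.card_filter_univ_succ', if_pos (by simp), add_comm, delC]
  congr 1
  refine card_bij (fun i _ => (i : ℕ) + 2) ?_ (fun _ _ _ _ h => Fin.ext (by simpa using h)) ?_
  · intro i hi
    simp only [mem_filter, mem_univ, true_and] at hi
    simp only [DelSet, mem_filter, mem_Icc]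
    exact ⟨by omega, by omega, fun j hj => hi j (by rw [Fin.lt_def]; simp; omega)⟩
  · intro b hb
    simp only [DelSet, mem_filter, mem_Icc] at hb
    obtain ⟨⟨h2, hbn⟩, hb1, hmin⟩ := hb
    refine ⟨⟨b - 2, by omega⟩, ?_, by simp; omega⟩
    simp only [mem_filter, mem_univ, true_and]
    intro j hj
    convert hmin j (by rw [Fin.lt_def] at hj; simp at hj; omega) using 3
    simp; omega

lemma card_ltrMins_insertMax (e : Perm (Fin n)) (p : Fin (n + 1)) :
    #(ltrMins (insertMax e p)) = #(ltrMins e) + if p = 0 then 1 else 0 := by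
  rw [ltrMins, Fin.card_filter_univ_succAbove p, add_comm]
  congr 1
  · refine congrArg card (filter_congr fun i _ => ?_)
    rw [Fin.forall_iff_succAbove p]
    simp [Fin.succAbove_lt_succAbove_iff, Fin.castSucc_lt_last]
  · have : (∀ j < p, Fin.last n < insertMax e p j) ↔ p = 0 := by
      simp only [(Fin.le_last _).not_gt, imp_false, not_lt]
      exact ⟨fun h => le_antisymm (h 0) (Fin.zero_le p), fun h j => h ▸ Fin.zero_le j⟩
    simp [this]

lemma delC_insertMax (e : Perm (Fin (n + 1))) (p : Fin (n + 2)) :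
    delC (insertMax e p) = delC e + if p = 0 then 1 else 0 := by
  have := card_ltrMins_insertMax e p
  rw [card_ltrMins, card_ltrMins] at this
  omega

end InsertMax

section GeneratingFunction

variable {R : Type*} [CommSemiring R] (q t : R)

lemma sum_pow_sub_mul_pow_ite (m : ℕ) :
    ∑ p : Fin (m + 1), q ^ (m - p) * t ^ (if p = 0 then 1 else 0) =
      ∑ i ∈ range m, q ^ i + q ^ m * t := by
  rw [Fin.sum_univ_succ, add_comm]
  simp only [Fin.succ_ne_zero, if_false, if_true, pow_zero, mul_one, Fin.val_succ,
    Fin.val_zero, Nat.sub_zero, pow_one]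
  rw [Fin.sum_univ_eq_sum_range (fun i => q ^ (m - (i + 1))), ← sum_range_reflect (q ^ ·) m]
  congr 1
  exact sum_congr rfl fun i hi => congrArg (q ^ ·) (by rw [mem_range] at hi; omega)

lemma sum_pow_invS_mul_pow_delC_succ (m : ℕ) :
    ∑ σ : Perm (Fin (m + 2)), q ^ invS σ * t ^ delC σ =
      (∑ e : Perm (Fin (m + 1)), q ^ invS e * t ^ delC e) *
        (∑ i ∈ range (m + 1), q ^ i + q ^ (m + 1) * t) := by
  rw [← insertMax_bijective.sum_comp, Fintype.sum_prod_type, ← sum_pow_sub_mul_pow_ite, sum_mul]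
  refine Fintype.sum_congr _ _ fun e => ?_
  rw [mul_sum]
  refine Fintype.sum_congr _ _ fun p => ?_
  rw [invS_insertMax, delC_insertMax]
  ring

end GeneratingFunction

/-- `∑_{σ ∈ S_n} q^{ℓ_S(σ)} t^{del_S(σ)} = (1+qt)(1+q+q²t)⋯(1+q+⋯+q^{n-2}+q^{n-1}t)`. -/
theorem stmt8 (n : ℕ) (R : Type*) [CommRing R] (q t : R) :
    ∑ σ : Equiv.Perm (Fin n), q ^ invS σ * t ^ delC σ =
      ∏ j ∈ Finset.range (n - 1), ((∑ i ∈ Finset.range (j + 1), q ^ i) + q ^ (j + 1) * t) := by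
  induction n with
  | zero => simp [invS, delC, DelSet]
  | succ m ih =>
    cases m with
    | zero => simp [invS, delC, DelSet, Fin.fin_one_eq_zero]
    | succ m =>
      rw [sum_pow_invS_mul_pow_delC_succ, ih]
      simp [prod_range_succ]
end

section
/- The generating function of the pair (A-length, A-delent number) over the alternating group A_{n+1} factors as: Σ_{w ∈ A_{n+1}} q^{ℓ_A(w)} t^{del_A(w)} = (1+2qt)(1+q+2q²t)···(1+q+...+q^{n-2}+2q^{n-1}t). -/
open scoped Classical
open Finset

noncomputable section AuxNine

variable {m : ℕ}

lemma sgen_fix {i : ℕ} (x : Fin m) (h1 : (x:ℕ) ≠ i - 1) (h2 : (x:ℕ) ≠ i) :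
    sgen m i x = x := by
  unfold sgen
  split
  · exact Equiv.swap_apply_of_ne_of_ne (by simp [Fin.ext_iff, h1]) (by simp [Fin.ext_iff, h2])
  · rfl

lemma sgen_left {i : ℕ} (hi : 1 ≤ i) (him : i < m) :
    sgen m i ⟨i - 1, by omega⟩ = ⟨i, him⟩ := by
  unfold sgen
  rw [dif_pos ⟨hi, him⟩]
  exact Equiv.swap_apply_left _ _

lemma sgen_right {i : ℕ} (hi : 1 ≤ i) (him : i < m) :
    sgen m i ⟨i, him⟩ = ⟨i - 1, by omega⟩ := by
  unfold sgen
  rw [dif_pos ⟨hi, him⟩]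
  exact Equiv.swap_apply_right _ _

lemma agen_fix {i : ℕ} (hi : 1 ≤ i) (x : Fin m) (hx : i + 1 < (x:ℕ)) :
    agen m i x = x := by
  have h1 : sgen m (i+1) x = x := sgen_fix x (by omega) (by omega)
  have h2 : sgen m 1 x = x := sgen_fix x (by omega) (by omega)
  simp [agen, Equiv.Perm.mul_apply, h1, h2]

lemma agen_self {i : ℕ} (hi : 1 ≤ i) (him : i + 1 < m) :
    agen m i ⟨i, by omega⟩ = ⟨i + 1, him⟩ := by
  have h1 : sgen m (i+1) ⟨i, by omega⟩ = ⟨i+1, him⟩ := by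
    have := sgen_left (i := i+1) (by omega) him
    simpa using this
  have h2 : sgen m 1 ⟨i+1, him⟩ = ⟨i+1, him⟩ := sgen_fix _ (by simp) (by simp; omega)
  simp [agen, Equiv.Perm.mul_apply, h1, h2]

lemma agen_one_two (hm : 2 < m) :
    agen m 1 ⟨2, hm⟩ = ⟨0, by omega⟩ := by
  have h1 : sgen m 2 ⟨2, hm⟩ = ⟨1, by omega⟩ := by
    have := sgen_right (i := 2) (by omega) hm
    simpa using this
  have h2 : sgen m 1 ⟨1, by omega⟩ = ⟨0, by omega⟩ := by
    have := sgen_right (m := m) (i := 1) le_rfl (by omega)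
    simpa using this
  simp [agen, Equiv.Perm.mul_apply, h1, h2]

lemma agen_one_inv_zero (hm : 2 < m) :
    (agen m 1)⁻¹ ⟨0, by omega⟩ = ⟨2, hm⟩ := by
  rw [Equiv.Perm.inv_eq_iff_eq, agen_one_two hm]

lemma list_prod_fix (x : Fin m) :
    ∀ l : List (Equiv.Perm (Fin m)), (∀ p ∈ l, p x = x) → l.prod x = x := by
  intro l
  induction l with
  | nil => simp
  | cons p l ih =>
      intro h
      simp only [List.prod_cons, Equiv.Perm.mul_apply]
      rw [ih (fun p hp => h p (List.mem_cons_of_mem _ hp)), h p List.mem_cons_self]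

lemma aDProd_fix {j k : ℕ} (hk : 1 ≤ k) (x : Fin m) (hx : j + 1 < (x:ℕ)) :
    aDProd m j k x = x := by
  apply list_prod_fix
  intro p hp
  simp only [aDProd, List.mem_map, List.mem_range] at hp
  obtain ⟨t, ht, rfl⟩ := hp
  exact agen_fix (by omega) x (by omega)

lemma elemA_fix {j : ℕ} (k : ℕ) (hj : 1 ≤ j) (x : Fin m) (hx : j + 1 < (x:ℕ)) :
    elemA m j k x = x := by
  unfold elemA
  split
  · have h1 : agen m 1 x = x := agen_fix (by omega) x (by omega)
    have h2 : (agen m 1)⁻¹ x = x := by rw [Equiv.Perm.inv_eq_iff_eq, h1]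
    simp only [Equiv.Perm.mul_apply, h2]
    exact aDProd_fix (by omega) x hx
  · exact aDProd_fix (by omega) x hx

lemma aDProd_self (j : ℕ) : aDProd m j (j + 1) = 1 := by
  simp [aDProd]

lemma aDProd_peel {j k : ℕ} (hk : k ≤ j) :
    aDProd m j k = aDProd m j (k + 1) * agen m k := by
  unfold aDProd
  have h1 : j + 1 - k = (j - k) + 1 := by omega
  have h2 : j + 1 - (k+1) = j - k := by omega
  rw [h1, h2, List.range_succ, List.map_append, List.prod_append]
  simp only [List.map_cons, List.map_nil, List.prod_cons, List.prod_nil, mul_one,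
    Nat.sub_sub_self hk]

lemma aDProd_apply : ∀ (d : ℕ) {j k : ℕ} (hk : 1 ≤ k) (hd : k + d = j + 1) (hjm : j + 1 < m),
    aDProd m j k ⟨k, by omega⟩ = ⟨j + 1, hjm⟩ := by
  intro d
  induction d with
  | zero =>
      intro j k hk hd hjm
      have : k = j + 1 := by omega
      subst this
      simp [aDProd_self]
  | succ d ih =>
      intro j k hk hd hjm
      rw [aDProd_peel (by omega)]
      simp only [Equiv.Perm.mul_apply]
      rw [show agen m k ⟨k, by omega⟩ = ⟨k+1, by omega⟩ from agen_self hk (by omega)]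
      exact ih (by omega) (by omega) hjm

lemma elemA_apply {j k : ℕ} (hj : 1 ≤ j) (hjm : j + 1 < m) (hk : k ≤ j + 1) :
    elemA m j k ⟨k, by omega⟩ = ⟨j + 1, hjm⟩ := by
  unfold elemA
  rcases Nat.eq_zero_or_pos k with rfl | hk1
  · rw [if_pos rfl]
    simp only [Equiv.Perm.mul_apply]
    rw [show ((⟨0, by omega⟩ : Fin m)) = (⟨0, by omega⟩ : Fin m) from rfl,
      agen_one_inv_zero (by omega)]
    exact aDProd_apply (j - 1) (by omega) (by omega) hjm
  · rw [if_neg (by omega)]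
    exact aDProd_apply (j + 1 - k) (by omega) (by omega) hjm

lemma sign_sgen {i : ℕ} (hi : 1 ≤ i) (him : i < m) :
    Equiv.Perm.sign (sgen m i) = -1 := by
  unfold sgen
  rw [dif_pos ⟨hi, him⟩]
  exact Equiv.Perm.sign_swap (by simp [Fin.ext_iff]; omega)

lemma sign_agen {i : ℕ} (hi : 1 ≤ i) (him : i + 1 < m) :
    Equiv.Perm.sign (agen m i) = 1 := by
  rw [agen, map_mul, sign_sgen (by omega) (by omega), sign_sgen (by omega) him]
  decide

lemma sign_aDProd {j k : ℕ} (hk : 1 ≤ k) (hjm : j + 1 < m) :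
    Equiv.Perm.sign (aDProd m j k) = 1 := by
  unfold aDProd
  rw [map_list_prod]
  apply List.prod_eq_one
  intro x hx
  simp only [List.map_map, List.mem_map, List.mem_range, Function.comp] at hx
  obtain ⟨t, ht, rfl⟩ := hx
  exact sign_agen (by omega) (by omega)

lemma sign_elemA {j : ℕ} (k : ℕ) (hj : 1 ≤ j) (hjm : j + 1 < m) :
    Equiv.Perm.sign (elemA m j k) = 1 := by
  unfold elemA
  split
  · rw [map_mul, map_inv, sign_aDProd (by omega) hjm, sign_agen (by omega) (by omega)]
    decide
  · exact sign_aDProd (by omega) hjm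

end AuxNine

noncomputable section AuxNine2

variable {m : ℕ}

def Qprod (m l : ℕ) (k : ℕ → ℕ) : Equiv.Perm (Fin m) :=
  (List.ofFn fun j : Fin l => elemA m ((j : ℕ) + 1) (k j)).prod

lemma Qprod_zero (k : ℕ → ℕ) : Qprod m 0 k = 1 := by simp [Qprod]

lemma Qprod_succ (l : ℕ) (k : ℕ → ℕ) :
    Qprod m (l + 1) k = Qprod m l k * elemA m (l + 1) (k l) := by
  unfold Qprod
  rw [List.ofFn_succ', List.concat_eq_append, List.prod_append]
  simp

lemma Qprod_congr (l : ℕ) (k k' : ℕ → ℕ) (h : ∀ j < l, k j = k' j) :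
    Qprod m l k = Qprod m l k' := by
  unfold Qprod
  have he : (fun j : Fin l => elemA m ((j : ℕ) + 1) (k j))
      = fun j : Fin l => elemA m ((j : ℕ) + 1) (k' j) := by
    funext j; rw [h j j.2]
  rw [he]

lemma Qprod_fix (l : ℕ) (k : ℕ → ℕ) (x : Fin m) (hx : l + 1 < (x : ℕ)) :
    Qprod m l k x = x := by
  apply list_prod_fix
  intro p hp
  rw [List.mem_ofFn] at hp
  obtain ⟨j, rfl⟩ := hp
  exact elemA_fix _ (by omega) x (by omega)

lemma sign_Qprod (l : ℕ) (hval : ∀ j < l, j + 3 ≤ m) (k : ℕ → ℕ) :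
    Equiv.Perm.sign (Qprod m l k) = 1 := by
  unfold Qprod
  rw [map_list_prod]
  apply List.prod_eq_one
  intro x hx
  simp only [List.map_ofFn, List.mem_ofFn, Function.comp] at hx
  obtain ⟨j, rfl⟩ := hx
  exact sign_elemA _ (by omega) (by have := hval j j.2; omega)

lemma Qprod_inj : ∀ (l : ℕ), (∀ j < l, j + 3 ≤ m) → ∀ k k' : ℕ → ℕ,
    (∀ j < l, k j ≤ j + 2) → (∀ j < l, k' j ≤ j + 2) →
    Qprod m l k = Qprod m l k' → ∀ j < l, k j = k' j := by
  intro l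
  induction l with
  | zero => intro _ _ _ _ _ _ j hj; omega
  | succ l ih =>
      intro hval k k' hb hb' heq
      have hm : l + 1 + 3 ≤ m + 1 := by have := hval l (by omega); omega
      have hml : l + 3 ≤ m := by have := hval l (by omega); omega
      have key : ∀ (kk : ℕ → ℕ) (hbk : kk l ≤ l + 2),
          Qprod m (l + 1) kk ⟨kk l, by omega⟩ = ⟨l + 2, by omega⟩ := by
        intro kk hbk
        rw [Qprod_succ]
        simp only [Equiv.Perm.mul_apply]
        rw [elemA_apply (by omega) (by omega) hbk]
        exact Qprod_fix l kk _ (by simp)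
      have h1 := key k (hb l (by omega))
      have h2 := key k' (hb' l (by omega))
      rw [heq] at h1
      have hkl : k l = k' l := by
        have := (Qprod m (l+1) k').injective (h1.trans h2.symm)
        simpa [Fin.ext_iff] using this
      have hQ : Qprod m l k = Qprod m l k' := by
        have e1 := Qprod_succ (m := m) l k
        have e2 := Qprod_succ (m := m) l k'
        rw [e1, e2, hkl] at heq
        exact mul_right_cancel heq
      intro j hj
      rcases Nat.lt_or_ge j l with h | h
      · exact ih (fun j hj => hval j (by omega)) k k' (fun j hj => hb j (by omega))
          (fun j hj => hb' j (by omega)) hQ j h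
      · have : j = l := by omega
        subst this; exact hkl

lemma even_fix_eq_one (w : Equiv.Perm (Fin m)) (hw : Equiv.Perm.sign w = 1)
    (hfix : ∀ x : Fin m, 1 < (x : ℕ) → w x = x) : w = 1 := by
  rcases Nat.lt_or_ge m 2 with hm | hm
  · ext x
    have h1 := x.2
    have h2 := (w x).2
    simp only [Equiv.Perm.coe_one, id_eq]
    omega
  · have key : ∀ y : Fin m, (y : ℕ) ≤ 1 → (w y : ℕ) ≤ 1 := by
      intro y hy
      by_contra h
      have h2 : w (w y) = w y := hfix (w y) (by omega)
      have := w.injective h2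
      rw [this] at h
      omega
    set z0 : Fin m := ⟨0, by omega⟩ with hz0
    set z1 : Fin m := ⟨1, by omega⟩ with hz1
    have hv0 : (z0 : ℕ) = 0 := by rw [hz0]
    have hv1 : (z1 : ℕ) = 1 := by rw [hz1]
    have hne01 : z0 ≠ z1 := by rw [Ne, Fin.ext_iff, hv0, hv1]; omega
    have h0 := key z0 (by omega)
    have h1 := key z1 (by omega)
    have hneq : (w z0 : ℕ) ≠ (w z1 : ℕ) := fun hc => hne01 (w.injective (Fin.ext hc))
    have hext : ∀ x : Fin m, (x : ℕ) ≤ 1 → (x = z0 ∨ x = z1) := by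
      intro x hx
      rcases Nat.eq_zero_or_pos (x : ℕ) with h | h
      · exact Or.inl (Fin.ext (by omega))
      · exact Or.inr (Fin.ext (by omega))
    rcases Nat.eq_zero_or_pos (w z0 : ℕ) with hz | hz
    · have hwz0 : w z0 = z0 := Fin.ext (by omega)
      have hwz1 : w z1 = z1 := Fin.ext (by omega)
      ext x
      simp only [Equiv.Perm.coe_one, id_eq]
      rcases Nat.lt_or_ge 1 (x : ℕ) with hx | hx
      · exact congrArg Fin.val (hfix x hx)
      · rcases hext x hx with rfl | rfl
        · exact congrArg Fin.val hwz0
        · exact congrArg Fin.val hwz1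
    · exfalso
      have hwz0 : w z0 = z1 := Fin.ext (by omega)
      have hwz1 : w z1 = z0 := Fin.ext (by omega)
      have hsw : w = Equiv.swap z0 z1 := by
        ext x
        apply congrArg Fin.val
        rcases Nat.lt_or_ge 1 (x : ℕ) with hx | hx
        · rw [hfix x hx, Equiv.swap_apply_of_ne_of_ne]
          · intro hc; rw [hc] at hx; omega
          · intro hc; rw [hc] at hx; omega
        · rcases hext x hx with rfl | rfl
          · rw [hwz0, Equiv.swap_apply_left]
          · rw [hwz1, Equiv.swap_apply_right]
      rw [hsw, Equiv.Perm.sign_swap hne01] at hw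
      exact absurd hw (by decide)

lemma Qprod_surj : ∀ (l : ℕ), (∀ j < l, j + 3 ≤ m) → ∀ w : Equiv.Perm (Fin m),
    Equiv.Perm.sign w = 1 → (∀ x : Fin m, l + 1 < (x : ℕ) → w x = x) →
    ∃ k : ℕ → ℕ, (∀ j < l, k j ≤ j + 2) ∧ Qprod m l k = w := by
  intro l
  induction l with
  | zero =>
      intro _ w hw hfix
      exact ⟨fun _ => 0, fun j hj => by omega,
        by rw [Qprod_zero, (even_fix_eq_one w hw hfix)]⟩
  | succ l ih =>
      intro hval w hw hfix
      have hml : l + 3 ≤ m := hval l (by omega)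
      set xtop : Fin m := ⟨l + 2, by omega⟩
      set c : ℕ := (w⁻¹ xtop : ℕ) with hc
      have hcle : c ≤ l + 2 := by
        by_contra h
        have h2 : w (w⁻¹ xtop) = w⁻¹ xtop := hfix _ (by omega)
        rw [← Equiv.Perm.mul_apply, mul_inv_cancel, Equiv.Perm.one_apply] at h2
        have : (xtop : ℕ) = c := by rw [h2]
        simp [xtop] at this
        omega
      have hwinv : w⁻¹ xtop = ⟨c, by omega⟩ := by simp [Fin.ext_iff, hc]
      set v : Equiv.Perm (Fin m) := elemA m (l + 1) c with hv
      have hvc : v ⟨c, by omega⟩ = xtop := elemA_apply (by omega) (by omega) hcle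
      have hsv : Equiv.Perm.sign v = 1 := sign_elemA _ (by omega) (by omega)
      set w' := w * v⁻¹ with hw'
      have hw's : Equiv.Perm.sign w' = 1 := by
        rw [hw', map_mul, map_inv, hw, hsv]; decide
      have hw'fix : ∀ x : Fin m, l + 1 < (x : ℕ) → w' x = x := by
        intro x hx
        rcases Nat.lt_or_ge (l + 2) (x : ℕ) with h | h
        · have hvx : v x = x := elemA_fix _ (by omega) x (by omega)
          have : v⁻¹ x = x := by rw [Equiv.Perm.inv_eq_iff_eq, hvx]
          rw [hw', Equiv.Perm.mul_apply, this]
          exact hfix x (by omega)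
        · have hxe : x = xtop := by simp [Fin.ext_iff, xtop]; omega
          have h1 : v⁻¹ x = ⟨c, by omega⟩ := by
            rw [Equiv.Perm.inv_eq_iff_eq, hvc, hxe]
          rw [hw', Equiv.Perm.mul_apply, h1, hxe]
          rw [← hwinv, ← Equiv.Perm.mul_apply, mul_inv_cancel, Equiv.Perm.one_apply]
      obtain ⟨k0, hk0b, hk0⟩ := ih (fun j hj => hval j (by omega)) w' hw's hw'fix
      refine ⟨fun j => if j = l then c else k0 j, ?_, ?_⟩
      · intro j hj
        show (if j = l then c else k0 j) ≤ j + 2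
        rcases Nat.lt_or_ge j l with h | h
        · rw [if_neg (by omega)]; exact hk0b j h
        · have : j = l := by omega
          subst this; rw [if_pos rfl]; omega
      · rw [Qprod_succ, Qprod_congr l _ k0 (fun j hj => if_neg (by omega)), hk0]
        show w * v⁻¹ * elemA m (l + 1) (if l = l then c else k0 l) = w
        rw [if_pos rfl, ← hv]
        simp

end AuxNine2

noncomputable section AuxNine3

variable {m : ℕ}

def liftc {m : ℕ} (k : Fin (m - 2) → ℕ) : ℕ → ℕ :=
  fun j => if h : j < m - 2 then k ⟨j, h⟩ else 0

lemma Qprod_liftc (k : Fin (m - 2) → ℕ) :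
    Qprod m (m - 2) (liftc k)
      = (List.ofFn fun j : Fin (m - 2) => elemA m ((j : ℕ) + 1) (k j)).prod := by
  unfold Qprod
  have he : (fun j : Fin (m - 2) => elemA m ((j : ℕ) + 1) (liftc k ↑j))
      = fun j : Fin (m - 2) => elemA m ((j : ℕ) + 1) (k j) := by
    funext j
    unfold liftc
    rw [dif_pos j.2]
  rw [he]

lemma hval_m : ∀ j, j < m - 2 → j + 3 ≤ m := by omega

lemma exists_isCanonA (w : Equiv.Perm (Fin m)) (hw : Equiv.Perm.sign w = 1) :
    ∃ k, isCanonA m w k := by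
  obtain ⟨k, hb, hQ⟩ := Qprod_surj (m - 2) hval_m w hw
    (fun x hx => absurd x.2 (by omega))
  refine ⟨fun j => k ↑j, fun j => hb ↑j j.2, ?_⟩
  exact hQ

lemma isCanonA_unique (w : Equiv.Perm (Fin m)) (k k' : Fin (m - 2) → ℕ)
    (h : isCanonA m w k) (h' : isCanonA m w k') : k = k' := by
  have hQ : Qprod m (m - 2) (liftc k) = w := by rw [Qprod_liftc]; exact h.2
  have hQ' : Qprod m (m - 2) (liftc k') = w := by rw [Qprod_liftc]; exact h'.2
  have key := Qprod_inj (m - 2) hval_m (liftc k) (liftc k')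
    (fun j hj => by unfold liftc; rw [dif_pos hj]; exact (h.1 ⟨j, hj⟩))
    (fun j hj => by unfold liftc; rw [dif_pos hj]; exact (h'.1 ⟨j, hj⟩))
    (hQ.trans hQ'.symm)
  funext j
  have := key ↑j j.2
  unfold liftc at this
  rw [dif_pos j.2, dif_pos j.2] at this
  exact this

lemma kvecA_eq (w : Equiv.Perm (Fin m)) (k : Fin (m - 2) → ℕ)
    (h : isCanonA m w k) : kvecA m w = k := by
  unfold kvecA
  rw [dif_pos ⟨k, h⟩]
  exact isCanonA_unique w _ k (Exists.choose_spec (⟨k, h⟩ : ∃ k, isCanonA m w k)) h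

lemma kvecA_spec (w : Equiv.Perm (Fin m)) (hw : Equiv.Perm.sign w = 1) :
    isCanonA m w (kvecA m w) := by
  obtain ⟨k, hk⟩ := exists_isCanonA w hw
  rw [kvecA_eq w k hk]
  exact hk

lemma sign_canonProd (k : Fin (m - 2) → ℕ) :
    Equiv.Perm.sign (List.ofFn fun j : Fin (m - 2) => elemA m ((j : ℕ) + 1) (k j)).prod = 1 := by
  rw [← Qprod_liftc]
  exact sign_Qprod (m - 2) hval_m _

lemma coordSum {R : Type*} [CommRing R] (q t : R) (J : ℕ) :
    ∑ c ∈ Finset.range (J + 3),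
      q ^ (if c = 0 then J + 1 else J + 2 - c) * t ^ (if c ≤ 1 then 1 else 0)
      = (∑ i ∈ Finset.range (J + 1), q ^ i) + 2 * q ^ (J + 1) * t := by
  rw [Finset.sum_range_succ' _ (J + 2), Finset.sum_range_succ' _ (J + 1)]
  have h2 : ∀ c ∈ Finset.range (J + 1),
      q ^ (if c + 1 + 1 = 0 then J + 1 else J + 2 - (c + 1 + 1))
        * t ^ (if c + 1 + 1 ≤ 1 then 1 else 0) = q ^ (J - c) := by
    intro c _
    rw [if_neg (by omega), if_neg (by omega), show J + 2 - (c + 1 + 1) = J - c by omega]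
    ring
  rw [Finset.sum_congr rfl h2]
  rw [show (∑ c ∈ Finset.range (J + 1), q ^ (J - c)) = ∑ c ∈ Finset.range (J + 1), q ^ c from by
    have := Finset.sum_range_reflect (fun c => q ^ c) (J + 1)
    simpa using this]
  rw [if_neg (by omega), if_pos (by omega), if_pos rfl, if_pos (by omega),
    show J + 2 - 1 = J + 1 by omega]
  ring

end AuxNine3

/-- `∑_{w ∈ A_{n+1}} q^{ℓ_A(w)} t^{del_A(w)} = (1+2qt)(1+q+2q²t)⋯(1+q+⋯+q^{n-2}+2q^{n-1}t)`. -/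
theorem stmt9 (n : ℕ) (R : Type*) [CommRing R] (q t : R) :
    ∑ w ∈ Finset.univ.filter
        (fun w : Equiv.Perm (Fin (n + 1)) => w ∈ alternatingGroup (Fin (n + 1))),
        q ^ lenA (n + 1) w * t ^ delA (n + 1) w =
      ∏ j ∈ Finset.range (n - 1),
        ((∑ i ∈ Finset.range (j + 1), q ^ i) + 2 * q ^ (j + 1) * t) := by
  classical
  set m := n + 1 with hm
  have hsign : ∀ w : Equiv.Perm (Fin m),
      w ∈ alternatingGroup (Fin m) ↔ Equiv.Perm.sign w = 1 := fun w =>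
    Equiv.Perm.mem_alternatingGroup
  rw [Finset.sum_nbij' (i := kvecA m)
    (j := fun k : Fin (m - 2) → ℕ =>
      (List.ofFn fun j : Fin (m - 2) => elemA m ((j : ℕ) + 1) (k j)).prod)
    (t := Fintype.piFinset fun j : Fin (m - 2) => Finset.range ((j : ℕ) + 3))
    (g := fun k : Fin (m - 2) → ℕ => ∏ j : Fin (m - 2),
      q ^ (if k j = 0 then (j : ℕ) + 1 else (j : ℕ) + 2 - k j)
        * t ^ (if k j ≤ 1 then 1 else 0))
    (hi := ?_) (hj := ?_) (left_neg := ?_) (right_neg := ?_) (h := ?_)]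
  · rw [← Finset.prod_univ_sum (fun j : Fin (m - 2) => Finset.range ((j : ℕ) + 3))
      (fun (j : Fin (m - 2)) (c : ℕ) =>
        q ^ (if c = 0 then (j : ℕ) + 1 else (j : ℕ) + 2 - c) * t ^ (if c ≤ 1 then 1 else 0))]
    rw [Fin.prod_univ_eq_prod_range (fun J =>
      ∑ c ∈ Finset.range (J + 3),
        q ^ (if c = 0 then J + 1 else J + 2 - c) * t ^ (if c ≤ 1 then 1 else 0)) (m - 2)]
    rw [show m - 2 = n - 1 from rfl]
    exact Finset.prod_congr rfl fun J _ => coordSum q t J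
  · intro w hw
    simp only [Finset.mem_filter, Finset.mem_univ, true_and, hsign] at hw
    have hc := kvecA_spec w hw
    rw [Fintype.mem_piFinset]
    intro j
    rw [Finset.mem_range]
    have := hc.1 j
    omega
  · intro k hk
    simp only [Finset.mem_filter, Finset.mem_univ, true_and, hsign]
    exact sign_canonProd k
  · intro w hw
    simp only [Finset.mem_filter, Finset.mem_univ, true_and, hsign] at hw
    exact (kvecA_spec w hw).2
  · intro k hk
    rw [Fintype.mem_piFinset] at hk
    apply kvecA_eq
    refine ⟨fun j => ?_, rfl⟩
    have := hk j
    rw [Finset.mem_range] at this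
    omega
  · intro w hw
    beta_reduce
    unfold lenA delA
    rw [Finset.card_filter, Finset.prod_mul_distrib,
      Finset.prod_pow_eq_pow_sum, Finset.prod_pow_eq_pow_sum]
end

section
/- The reverse major index and the length are equi-distributed with the delent number over S_n: Σ_{σ ∈ S_n} q^{ℓ_S(σ)} t^{del_S(σ)} = Σ_{σ ∈ S_n} q^{rmaj_{S_n}(σ)} t^{del_S(σ)}. -/
open scoped Classical
open Finset

namespace Stmt10Aux

variable {n : ℕ}


open Equiv

variable {n : ℕ}

/-- insertion of the largest value `n` at position `p` into `π`. -/
def ins (π : Equiv.Perm (Fin n)) (p : Fin (n + 1)) : Equiv.Perm (Fin (n + 1)) :=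
  ((finSuccEquiv' p).trans π.optionCongr).trans (finSuccEquiv' (Fin.last n)).symm

lemma ins_self (π : Equiv.Perm (Fin n)) (p : Fin (n + 1)) : ins π p p = Fin.last n := by
  simp [ins, finSuccEquiv'_at, finSuccEquiv'_symm_none]

lemma ins_succAbove (π : Equiv.Perm (Fin n)) (p : Fin (n + 1)) (j : Fin n) :
    ins π p (p.succAbove j) = (π j).castSucc := by
  simp [ins, finSuccEquiv'_succAbove, finSuccEquiv'_symm_some, Fin.succAbove_last]

/-- deletion of position `i ≠ p` (renumbering the positions other than `p`). -/
def dele (p : Fin (n + 1)) (i : Fin (n + 1)) (h : i ≠ p) : Fin n :=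
  ⟨if (i : ℕ) < (p : ℕ) then (i : ℕ) else (i : ℕ) - 1, by
    rcases Nat.lt_trichotomy (i : ℕ) (p : ℕ) with h1 | h1 | h1
    · have := p.isLt; simp [h1]; omega
    · exact absurd (Fin.ext h1) h
    · have := i.isLt; simp [Nat.not_lt.2 (le_of_lt h1)]; omega⟩

lemma succAbove_dele (p : Fin (n + 1)) (i : Fin (n + 1)) (h : i ≠ p) :
    p.succAbove (dele p i h) = i := by
  have hip : (i : ℕ) ≠ (p : ℕ) := fun hc => h (Fin.ext hc)
  rcases Nat.lt_or_ge (i : ℕ) (p : ℕ) with h1 | h1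
  · rw [Fin.succAbove_of_castSucc_lt]
    · ext; simp [dele, h1]
    · rw [Fin.lt_def]; simpa [dele, h1]
  · have h2 : (p : ℕ) < (i : ℕ) := lt_of_le_of_ne h1 (Ne.symm hip)
    rw [Fin.succAbove_of_le_castSucc]
    · ext; simp [dele, Nat.not_lt.2 h1, Fin.val_succ]; omega
    · rw [Fin.le_def]; simp [dele, Nat.not_lt.2 h1]; omega

lemma dele_succAbove (p : Fin (n + 1)) (j : Fin n) (h : p.succAbove j ≠ p) :
    dele p (p.succAbove j) h = j := by
  have := succAbove_dele p (p.succAbove j) h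
  exact Fin.succAbove_right_injective this

lemma ins_apply (π : Equiv.Perm (Fin n)) (p : Fin (n + 1)) (i : Fin (n + 1)) (h : i ≠ p) :
    ins π p i = (π (dele p i h)).castSucc := by
  conv_lhs => rw [← succAbove_dele p i h]
  exact ins_succAbove π p _

lemma coe_dele (p : Fin (n + 1)) (i : Fin (n + 1)) (h : i ≠ p) :
    ((dele p i h : Fin n) : ℕ) = if (i : ℕ) < (p : ℕ) then (i : ℕ) else (i : ℕ) - 1 := rfl

lemma coe_succAbove (p : Fin (n + 1)) (j : Fin n) :
    ((p.succAbove j : Fin (n + 1)) : ℕ) = if (j : ℕ) < (p : ℕ) then (j : ℕ) else (j : ℕ) + 1 := by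
  rcases Nat.lt_or_ge (j : ℕ) (p : ℕ) with h1 | h1
  · rw [Fin.succAbove_of_castSucc_lt]
    · simp [h1]
    · rw [Fin.lt_def]; simpa
  · rw [Fin.succAbove_of_le_castSucc]
    · simp [Nat.not_lt.2 h1]
    · rw [Fin.le_def]; simpa



lemma dele_lt_dele {p a b : Fin (n + 1)} (ha : a ≠ p) (hb : b ≠ p) (hab : a < b) :
    dele p a ha < dele p b hb := by
  have h1 : (a : ℕ) ≠ (p : ℕ) := fun hc => ha (Fin.ext hc)
  have h2 : (b : ℕ) ≠ (p : ℕ) := fun hc => hb (Fin.ext hc)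
  rw [Fin.lt_def] at hab ⊢
  rw [coe_dele, coe_dele]
  split_ifs <;> omega


lemma ins_ne_lt (π : Equiv.Perm (Fin n)) (p : Fin (n + 1)) (i : Fin (n + 1)) (h : i ≠ p) :
    ins π p i < Fin.last n := by
  rw [ins_apply π p i h]; exact Fin.castSucc_lt_last _


lemma invS_ins (π : Equiv.Perm (Fin n)) (p : Fin (n + 1)) :
    invS (ins π p) = invS π + (n - (p : ℕ)) := by
  classical
  set σ := ins π p with hσ
  have key := Finset.card_filter_add_card_filter_not
    (s := Finset.univ.filter fun q : Fin (n+1) × Fin (n+1) => q.1 < q.2 ∧ σ q.2 < σ q.1)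
    (p := fun q : Fin (n+1) × Fin (n+1) => q.1 = p ∨ q.2 = p)
  have h1 : ((Finset.univ.filter fun q : Fin (n+1) × Fin (n+1) => q.1 < q.2 ∧ σ q.2 < σ q.1).filter
      fun q => q.1 = p ∨ q.2 = p) = (Finset.Ioi p).image (fun b => (p, b)) := by
    ext ⟨a, b⟩
    simp only [Finset.mem_filter, Finset.mem_univ, true_and, Finset.mem_image, Finset.mem_Ioi,
      Prod.mk.injEq]
    constructor
    · rintro ⟨⟨hab, hinv⟩, hor⟩
      rcases hor with rfl | rfl
      · exact ⟨b, hab, rfl, rfl⟩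
      · exact absurd (lt_of_le_of_lt (by rw [ins_self]; exact Fin.le_last _) hinv) (lt_irrefl _)
    · rintro ⟨b', hb', rfl, rfl⟩
      refine ⟨⟨hb', ?_⟩, Or.inl rfl⟩
      rw [ins_self]
      exact ins_ne_lt π p b' (ne_of_gt hb')
  have h2 : ((Finset.univ.filter fun q : Fin (n+1) × Fin (n+1) => q.1 < q.2 ∧ σ q.2 < σ q.1).filter
      fun q => ¬(q.1 = p ∨ q.2 = p)).card = invS π := by
    rw [invS]
    refine Finset.card_bij'
      (i := fun q hq => (dele p q.1 (by simp at hq; tauto), dele p q.2 (by simp at hq; tauto)))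
      (j := fun q hq => (p.succAbove q.1, p.succAbove q.2)) ?hi ?hj ?left ?right
    case hi =>
      intro q hq
      simp only [Finset.mem_filter, Finset.mem_univ, true_and] at hq ⊢
      obtain ⟨⟨hab, hinv⟩, hne⟩ := hq
      push_neg at hne
      refine ⟨dele_lt_dele _ _ hab, ?_⟩
      rw [ins_apply π p q.1 hne.1, ins_apply π p q.2 hne.2, Fin.castSucc_lt_castSucc_iff] at hinv
      exact hinv
    case hj =>
      intro q hq
      simp only [Finset.mem_filter, Finset.mem_univ, true_and] at hq ⊢
      obtain ⟨hab, hinv⟩ := hq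
      have ha := Fin.succAbove_ne p q.1
      have hb := Fin.succAbove_ne p q.2
      refine ⟨⟨?_, ?_⟩, by tauto⟩
      · exact Fin.succAbove_lt_succAbove_iff.2 hab
      · rw [ins_apply π p _ ha, ins_apply π p _ hb, Fin.castSucc_lt_castSucc_iff,
          dele_succAbove, dele_succAbove]
        exact hinv
    case left =>
      intro q hq
      simp only [succAbove_dele]
    case right =>
      intro q hq
      simp only [dele_succAbove]
  have h3 : ((Finset.Ioi p).image (fun b => (p, b))).card = n - (p : ℕ) := by
    rw [Finset.card_image_of_injective _ (fun x y h => by simpa using h), Fin.card_Ioi]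
    simp
  rw [invS, ← key, h1, h2, h3, Nat.add_comm]

lemma mem_DelSet_iff {N : ℕ} (σ : Equiv.Perm (Fin N)) (i : ℕ) :
    i ∈ DelSet σ ↔ 2 ≤ i ∧ i ≤ N ∧
      ∃ h : i - 1 < N, ∀ j : Fin N, (j : ℕ) < i - 1 → σ ⟨i - 1, h⟩ < σ j := by
  simp [DelSet, Finset.mem_filter, Finset.mem_Icc, and_assoc]


lemma lrmin_ins (π : Equiv.Perm (Fin n)) (p : Fin (n + 1)) (M : Fin (n + 1)) (hM : M ≠ p) :
    (∀ j : Fin (n + 1), (j : ℕ) < (M : ℕ) → ins π p M < ins π p j) ↔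
    (∀ j' : Fin n, (j' : ℕ) < ((dele p M hM : Fin n) : ℕ) → π (dele p M hM) < π j') := by
  have hMp : (M : ℕ) ≠ (p : ℕ) := fun hc => hM (Fin.ext hc)
  constructor
  · intro h j' hj'
    have hne := Fin.succAbove_ne p j'
    have hlt : ((p.succAbove j' : Fin (n + 1)) : ℕ) < (M : ℕ) := by
      rw [coe_succAbove]; rw [coe_dele] at hj'
      split_ifs at hj' ⊢ <;> omega
    have := h _ hlt
    rwa [ins_apply π p M hM, ins_apply π p _ hne, dele_succAbove,
      Fin.castSucc_lt_castSucc_iff] at this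
  · intro h j hj
    by_cases hjp : j = p
    · rw [hjp, ins_self]
      exact ins_ne_lt π p M hM
    · have hj2 : ((dele p j hjp : Fin n) : ℕ) < ((dele p M hM : Fin n) : ℕ) :=
        Fin.lt_def.1 (dele_lt_dele hjp hM (Fin.lt_def.2 hj))
      have := h _ hj2
      rwa [ins_apply π p M hM, ins_apply π p j hjp, Fin.castSucc_lt_castSucc_iff]


lemma mem_DelSet_ins_iff (π : Equiv.Perm (Fin n)) (p : Fin (n + 1)) (i : ℕ)
    (h2 : 2 ≤ i) (hN : i ≤ n + 1) (hip : i ≠ (p : ℕ) + 1) (hsp : (p : ℕ) = 0 → 3 ≤ i) :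
    i ∈ DelSet (ins π p) ↔ (if i ≤ (p : ℕ) then i else i - 1) ∈ DelSet π := by
  have hpn : (p : ℕ) ≤ n := by omega
  have hlt : i - 1 < n + 1 := by omega
  have hM : (⟨i - 1, hlt⟩ : Fin (n + 1)) ≠ p := by
    intro hc; have := congrArg Fin.val hc; simp only at this; omega
  have hdc : ((dele p ⟨i - 1, hlt⟩ hM : Fin n) : ℕ) =
      if i - 1 < (p : ℕ) then i - 1 else i - 1 - 1 := coe_dele p _ hM
  have hdlt := (dele p ⟨i - 1, hlt⟩ hM).isLt
  have hkey := lrmin_ins π p ⟨i - 1, hlt⟩ hM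
  have hfd : (if i ≤ (p : ℕ) then i else i - 1) - 1 = ((dele p ⟨i - 1, hlt⟩ hM : Fin n) : ℕ) := by
    rw [hdc]; split_ifs <;> omega
  rw [mem_DelSet_iff, mem_DelSet_iff]
  constructor
  · rintro ⟨-, -, hw, hc⟩
    refine ⟨by split_ifs at hfd ⊢ <;> omega, by split_ifs at hfd ⊢ <;> omega, by omega, ?_⟩
    intro j' hj'
    have e1 : (⟨(if i ≤ (p : ℕ) then i else i - 1) - 1, by omega⟩ : Fin n) =
        dele p ⟨i - 1, hlt⟩ hM := Fin.ext hfd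
    rw [e1]
    exact (hkey.1 hc) j' (by omega)
  · rintro ⟨-, -, hw, hc⟩
    refine ⟨h2, hN, by omega, ?_⟩
    refine hkey.2 ?_
    intro j' hj'
    have e1 : dele p ⟨i - 1, hlt⟩ hM =
        (⟨(if i ≤ (p : ℕ) then i else i - 1) - 1, by omega⟩ : Fin n) := Fin.ext hfd.symm
    rw [e1]
    exact hc j' (by omega)


lemma delC_ins_pos (π : Equiv.Perm (Fin n)) (p : Fin (n + 1)) (hp : 1 ≤ (p : ℕ)) :
    delC (ins π p) = delC π := by
  unfold delC
  refine Finset.card_bij'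
    (i := fun i _ => if i ≤ (p : ℕ) then i else i - 1)
    (j := fun i _ => if i ≤ (p : ℕ) then i else i + 1) ?hi ?hj ?left ?right
  case hi =>
    intro i hi
    have h0 := (mem_DelSet_iff _ i).1 hi
    have hip : i ≠ (p : ℕ) + 1 := by
      intro hc
      obtain ⟨-, -, hlt, hcc⟩ := h0
      have h1 : (0 : ℕ) < i - 1 := by omega
      have := hcc ⟨0, by omega⟩ h1
      have hpe : (⟨i - 1, hlt⟩ : Fin (n + 1)) = p := Fin.ext (by simp only; omega)
      rw [hpe, ins_self] at this
      exact absurd (Fin.le_last _) (not_le.2 this)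
    exact (mem_DelSet_ins_iff π p i (by omega) (by omega) hip (by omega)).1 hi
  case hj =>
    intro i hi
    have h0 := (mem_DelSet_iff _ i).1 hi
    have hpn : (p : ℕ) ≤ n := by omega
    have key := mem_DelSet_ins_iff π p (if i ≤ (p : ℕ) then i else i + 1)
      (by split_ifs <;> omega) (by split_ifs <;> omega)
      (by split_ifs <;> omega) (by split_ifs <;> omega)
    rw [key]
    have : (if (if i ≤ (p : ℕ) then i else i + 1) ≤ (p : ℕ)
        then (if i ≤ (p : ℕ) then i else i + 1) else (if i ≤ (p : ℕ) then i else i + 1) - 1)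
        = i := by split_ifs <;> omega
    rwa [this]
  case left =>
    intro i hi
    have h0 := (mem_DelSet_iff _ i).1 hi
    have hip : i ≠ (p : ℕ) + 1 := by
      intro hc
      obtain ⟨-, -, hlt, hcc⟩ := h0
      have h1 : (0 : ℕ) < i - 1 := by omega
      have := hcc ⟨0, by omega⟩ h1
      have hpe : (⟨i - 1, hlt⟩ : Fin (n + 1)) = p := Fin.ext (by simp only; omega)
      rw [hpe, ins_self] at this
      exact absurd (Fin.le_last _) (not_le.2 this)
    split_ifs <;> omega
  case right =>
    intro i hi
    have h0 := (mem_DelSet_iff _ i).1 hi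
    split_ifs <;> omega


lemma delC_ins_zero (π : Equiv.Perm (Fin n)) (p : Fin (n + 1)) (hp : (p : ℕ) = 0) (hn : 1 ≤ n) :
    delC (ins π p) = delC π + 1 := by
  have hset : DelSet (ins π p) = insert 2 ((DelSet π).image (· + 1)) := by
    ext i
    rw [Finset.mem_insert, Finset.mem_image]
    constructor
    · intro hi
      have h0 := (mem_DelSet_iff _ i).1 hi
      by_cases h2 : i = 2
      · exact Or.inl h2
      · refine Or.inr ⟨i - 1, ?_, by omega⟩
        have := (mem_DelSet_ins_iff π p i (by omega) (by omega) (by omega) (by omega)).1 hi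
        rwa [if_neg (by omega)] at this
    · rintro (rfl | ⟨i', hi', rfl⟩)
      · rw [mem_DelSet_iff]
        refine ⟨le_refl 2, by omega, by omega, ?_⟩
        intro j hj
        have hjp : j = p := Fin.ext (by omega)
        rw [hjp, ins_self]
        refine ins_ne_lt π p _ ?_
        intro hc; have := congrArg Fin.val hc; simp only at this; omega
      · have h0 := (mem_DelSet_iff _ i').1 hi'
        have key := mem_DelSet_ins_iff π p (i' + 1) (by omega) (by omega) (by omega) (by omega)
        rw [key, if_neg (by omega)]
        simpa using hi'
  rw [delC, delC, hset, Finset.card_insert_of_notMem, Finset.card_image_of_injective _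
    (add_left_injective 1), Nat.add_comm]
  intro hc
  obtain ⟨i', hi', he⟩ := Finset.mem_image.1 hc
  have := (mem_DelSet_iff _ i').1 hi'
  omega

lemma mem_Des1_iff {N : ℕ} (σ : Equiv.Perm (Fin N)) (i : ℕ) :
    i ∈ Des1 σ ↔ 1 ≤ i ∧ ∃ h : i < N,
      σ ⟨i, h⟩ < σ ⟨i - 1, Nat.lt_of_le_of_lt (Nat.sub_le i 1) h⟩ := by
  simp only [Des1, Finset.mem_filter, Finset.mem_Ico]
  constructor
  · rintro ⟨⟨h1, h2⟩, h3, h4⟩; exact ⟨h1, h3, h4⟩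
  · rintro ⟨h1, h3, h4⟩; exact ⟨⟨h1, h3⟩, h3, h4⟩


lemma ins_lt_ins' (π : Equiv.Perm (Fin n)) (p : Fin (n + 1)) {a b : ℕ}
    (han : a < n + 1) (hbn : b < n + 1) (ha : a ≠ (p : ℕ)) (hb : b ≠ (p : ℕ)) :
    (ins π p ⟨a, han⟩ < ins π p ⟨b, hbn⟩) ↔
      π ⟨if a < (p : ℕ) then a else a - 1, by have := p.isLt; split_ifs <;> omega⟩ <
      π ⟨if b < (p : ℕ) then b else b - 1, by have := p.isLt; split_ifs <;> omega⟩ := by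
  have hA : (⟨a, han⟩ : Fin (n + 1)) ≠ p := fun hc => ha (by rw [← hc])
  have hB : (⟨b, hbn⟩ : Fin (n + 1)) ≠ p := fun hc => hb (by rw [← hc])
  rw [ins_apply π p _ hA, ins_apply π p _ hB, Fin.castSucc_lt_castSucc_iff]
  have e1 : dele p ⟨a, han⟩ hA =
      (⟨if a < (p : ℕ) then a else a - 1, by have := p.isLt; split_ifs <;> omega⟩ : Fin n) :=
    Fin.ext (coe_dele p _ hA)
  have e2 : dele p ⟨b, hbn⟩ hB =
      (⟨if b < (p : ℕ) then b else b - 1, by have := p.isLt; split_ifs <;> omega⟩ : Fin n) :=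
    Fin.ext (coe_dele p _ hB)
  rw [e1, e2]


lemma Des1_ins (π : Equiv.Perm (Fin n)) (p : Fin (n + 1)) :
    Des1 (ins π p) = ((Des1 π).filter (· < (p : ℕ))) ∪
      ((if (p : ℕ) + 1 ≤ n then {(p : ℕ) + 1} else (∅ : Finset ℕ)) ∪
        ((Des1 π).filter (fun i => (p : ℕ) < i)).image (· + 1)) := by
  have hpn : (p : ℕ) ≤ n := by have := p.isLt; omega
  ext i
  simp only [Finset.mem_union, Finset.mem_filter, Finset.mem_image]
  constructor
  · intro hi
    obtain ⟨h1, hin, hd⟩ := (mem_Des1_iff _ i).1 hi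
    rcases Nat.lt_trichotomy i (p : ℕ) with hip | hip | hip
    · left
      refine ⟨?_, hip⟩
      rw [mem_Des1_iff]
      refine ⟨h1, by omega, ?_⟩
      have := (ins_lt_ins' π p hin (by omega) (by omega) (by omega)).1 hd
      convert this using 2 <;> exact Fin.ext (by simp only; split_ifs <;> omega)
    · exfalso
      have hpe : (⟨i, hin⟩ : Fin (n + 1)) = p := Fin.ext hip
      rw [hpe, ins_self] at hd
      exact absurd (Fin.le_last _) (not_le.2 hd)
    · by_cases hip2 : i = (p : ℕ) + 1
      · right; left
        rw [if_pos (by omega)]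
        simpa using hip2
      · right; right
        refine ⟨i - 1, ⟨?_, by omega⟩, by omega⟩
        rw [mem_Des1_iff]
        refine ⟨by omega, by omega, ?_⟩
        have := (ins_lt_ins' π p hin (by omega) (by omega) (by omega)).1 hd
        convert this using 2 <;> exact Fin.ext (by simp only; split_ifs <;> omega)
  · intro hi
    rw [mem_Des1_iff]
    rcases hi with ⟨hiD, hip⟩ | hi | ⟨i', ⟨hi'D, hi'p⟩, rfl⟩
    · obtain ⟨h1, hin, hd⟩ := (mem_Des1_iff _ i).1 hiD
      refine ⟨h1, by omega, ?_⟩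
      refine (ins_lt_ins' π p _ _ (by omega) (by omega)).2 ?_
      convert hd using 2 <;> exact Fin.ext (by simp only; split_ifs <;> omega)
    · by_cases hn2 : (p : ℕ) + 1 ≤ n
      · rw [if_pos hn2, Finset.mem_singleton] at hi
        subst hi
        refine ⟨by omega, by omega, ?_⟩
        have hpe : (⟨(p : ℕ) + 1 - 1, by omega⟩ : Fin (n + 1)) = p := Fin.ext (by simp)
        rw [hpe, ins_self]
        refine ins_ne_lt π p _ ?_
        intro hc; have := congrArg Fin.val hc; simp only at this; omega
      · rw [if_neg hn2] at hi
        simp at hi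
    · obtain ⟨h1', hin', hd⟩ := (mem_Des1_iff _ i').1 hi'D
      refine ⟨by omega, by omega, ?_⟩
      refine (ins_lt_ins' π p _ _ (by omega) (by omega)).2 ?_
      convert hd using 2 <;> exact Fin.ext (by simp only; split_ifs <;> omega)

def delta (n : ℕ) (D : Finset ℕ) (p : ℕ) : ℕ :=
  (if p + 1 ≤ n ∧ p ∉ D then n - p else 0) + (D.filter (· < p)).card

lemma delta_lt (n : ℕ) (D : Finset ℕ) (hD : D ⊆ Finset.Ico 1 n) {p : ℕ}
    (hp : 1 ≤ p) (hpn : p ≤ n) : delta n D p < n := by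
  have hc1 : (D.filter (· < p)).card ≤ p - 1 := by
    refine le_trans (Finset.card_le_card (fun i hi => ?_)) (le_of_eq (Nat.card_Ico 1 p))
    simp only [Finset.mem_filter] at hi
    have := hD hi.1
    simp only [Finset.mem_Ico] at this ⊢
    omega
  have hc2 : (D.filter (· < p)).card ≤ n - 1 := by
    refine le_trans (Finset.card_le_card (Finset.filter_subset _ _)) ?_
    calc D.card ≤ (Finset.Ico 1 n).card := Finset.card_le_card hD
    _ = n - 1 := Nat.card_Ico 1 n
  unfold delta; split_ifs <;> omega

lemma delta_ne (n : ℕ) (D : Finset ℕ) (hD : D ⊆ Finset.Ico 1 n) {a b : ℕ}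
    (ha1 : 1 ≤ a) (hab : a < b) (hbn : b ≤ n) : delta n D a ≠ delta n D b := by
  have hmono : (D.filter (· < a)).card ≤ (D.filter (· < b)).card :=
    Finset.card_le_card (fun i hi => by simp only [Finset.mem_filter] at hi ⊢; exact ⟨hi.1, by omega⟩)
  have hDn : ∀ i ∈ D, 1 ≤ i ∧ i < n := fun i hi => by
    have := hD hi; simp only [Finset.mem_Ico] at this; exact this
  have lower : ∀ x, x ∉ D → D.card ≤ (D.filter (· < x)).card + (n - 1 - x) := by
    intro x hx
    have hsplit := Finset.card_filter_add_card_filter_not (s := D) (p := (· < x))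
    have : (D.filter (fun i => ¬ i < x)).card ≤ n - 1 - x := by
      refine le_trans (Finset.card_le_card (t := Finset.Icc (x + 1) (n - 1))
        (fun i hi => ?_)) (le_of_eq ?_)
      · simp only [Finset.mem_filter] at hi
        obtain ⟨hiD, hix⟩ := hi
        have h1 := hDn i hiD
        have : i ≠ x := fun hc => hx (hc ▸ hiD)
        exact Finset.mem_Icc.2 (by omega)
      · rw [Nat.card_Icc]; omega
    omega
  by_cases haD : a ∈ D <;> by_cases hbD : b ∈ D
  · have hstrict : (D.filter (· < a)).card < (D.filter (· < b)).card := by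
      refine Finset.card_lt_card ((Finset.ssubset_iff_of_subset
        (fun i hi => by simp only [Finset.mem_filter] at hi ⊢; exact ⟨hi.1, by omega⟩)).2 ⟨a, ?_, ?_⟩)
      · exact Finset.mem_filter.2 ⟨haD, hab⟩
      · simp
    have h1 := hDn a haD
    have h2 := hDn b hbD
    unfold delta
    rw [if_neg (by tauto), if_neg (by tauto)]
    set ca := (D.filter (· < a)).card
    set cb := (D.filter (· < b)).card
    omega
  · have hup : (D.filter (· < a)).card + 1 ≤ D.card := by
      refine Finset.card_lt_card ((Finset.ssubset_iff_of_subset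
        (Finset.filter_subset _ _)).2 ⟨a, haD, by simp⟩)
    have hlow := lower b hbD
    unfold delta
    rw [if_neg (by tauto)]
    split_ifs with h
    · have h1 := h.1
      set ca := (D.filter (· < a)).card
      set cb := (D.filter (· < b)).card
      omega
    · have h1 : b = n := by
        rcases Nat.lt_or_ge b n with hh | hh
        · exact absurd ⟨by omega, hbD⟩ h
        · omega
      set ca := (D.filter (· < a)).card
      set cb := (D.filter (· < b)).card
      omega
  · have hup : (D.filter (· < b)).card + 1 ≤ D.card := by
      refine Finset.card_lt_card ((Finset.ssubset_iff_of_subset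
        (Finset.filter_subset _ _)).2 ⟨b, hbD, by simp⟩)
    have hlow := lower a haD
    unfold delta
    rw [if_pos (⟨by omega, haD⟩ : a + 1 ≤ n ∧ a ∉ D), if_neg (by tauto)]
    set ca := (D.filter (· < a)).card
    set cb := (D.filter (· < b)).card
    omega
  · have hkey : (D.filter (· < b)).card ≤ (D.filter (· < a)).card + (b - a - 1) := by
      have hsub : D.filter (· < b) ⊆ (D.filter (· < a)) ∪ Finset.Ioo a b := by
        intro i hi
        simp only [Finset.mem_filter, Finset.mem_union, Finset.mem_Ioo] at hi ⊢
        have : i ≠ a := fun hc => haD (hc ▸ hi.1)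
        rcases Nat.lt_or_ge i a with h | h
        · exact Or.inl ⟨hi.1, h⟩
        · exact Or.inr ⟨by omega, hi.2⟩
      refine le_trans (Finset.card_le_card hsub) (le_trans (Finset.card_union_le _ _) ?_)
      rw [Nat.card_Ioo]
    unfold delta
    rw [if_pos (⟨by omega, haD⟩ : a + 1 ≤ n ∧ a ∉ D)]
    split_ifs with h
    · have h1 := h.1
      set ca := (D.filter (· < a)).card
      set cb := (D.filter (· < b)).card
      omega
    · have h1 : b = n := by
        rcases Nat.lt_or_ge b n with hh | hh
        · exact absurd ⟨by omega, hbD⟩ h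
        · omega
      set ca := (D.filter (· < a)).card
      set cb := (D.filter (· < b)).card
      omega

lemma delta_image (n : ℕ) (D : Finset ℕ) (hD : D ⊆ Finset.Ico 1 n) (hn : 1 ≤ n) :
    (Finset.Icc 1 n).image (delta n D) = Finset.range n := by
  have hinj : ∀ a ∈ Finset.Icc 1 n, ∀ b ∈ Finset.Icc 1 n,
      delta n D a = delta n D b → a = b := by
    intro a ha b hb heq
    simp only [Finset.mem_Icc] at ha hb
    rcases Nat.lt_trichotomy a b with h | h | h
    · exact absurd heq (delta_ne n D hD ha.1 h hb.2)
    · exact h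
    · exact absurd heq.symm (delta_ne n D hD hb.1 h ha.2)
  symm
  refine Finset.eq_of_subset_of_card_le ?_ ?_ |>.symm
  · intro x hx
    obtain ⟨p, hp, rfl⟩ := Finset.mem_image.1 hx
    simp only [Finset.mem_Icc] at hp
    exact Finset.mem_range.2 (delta_lt n D hD hp.1 hp.2)
  · rw [Finset.card_range, Finset.card_image_of_injOn (fun a ha b hb => hinj a ha b hb),
      Nat.card_Icc]
    omega

lemma sum_pow_delta {R : Type*} [CommRing R] (q : R) (n : ℕ) (D : Finset ℕ)
    (hD : D ⊆ Finset.Ico 1 n) :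
    ∑ p ∈ Finset.Icc 1 n, q ^ delta n D p = ∑ m ∈ Finset.range n, q ^ m := by
  rcases Nat.eq_zero_or_pos n with rfl | hn
  · simp
  rw [← delta_image n D hD hn, Finset.sum_image]
  intro a ha b hb heq
  simp only [Finset.mem_coe, Finset.mem_Icc] at ha hb
  rcases Nat.lt_trichotomy a b with h | h | h
  · exact absurd heq (delta_ne n D hD ha.1 h hb.2)
  · exact h
  · exact absurd heq.symm (delta_ne n D hD hb.1 h ha.2)

lemma Des1_subset {N : ℕ} (σ : Equiv.Perm (Fin N)) : ∀ i ∈ Des1 σ, 1 ≤ i ∧ i < N := by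
  intro i hi
  obtain ⟨h1, h2, -⟩ := (mem_Des1_iff σ i).1 hi
  exact ⟨h1, h2⟩


lemma rmaj1_ins (π : Equiv.Perm (Fin n)) (p : Fin (n + 1)) :
    rmaj1 (n + 1) (ins π p) = rmaj1 n π + delta n (Des1 π) (p : ℕ) := by
  have hpn : (p : ℕ) ≤ n := by have := p.isLt; omega
  set D := Des1 π with hDdef
  have hD := Des1_subset π
  have hdisj1 : Disjoint ((D.filter (· < (p : ℕ))))
      ((if (p : ℕ) + 1 ≤ n then {(p : ℕ) + 1} else (∅ : Finset ℕ)) ∪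
        (D.filter (fun i => (p : ℕ) < i)).image (· + 1)) := by
    rw [Finset.disjoint_left]
    intro a ha hb
    simp only [Finset.mem_filter] at ha
    rcases Finset.mem_union.1 hb with hb | hb
    · split_ifs at hb with hc
      · rw [Finset.mem_singleton] at hb; omega
      · simp at hb
    · obtain ⟨i', hi', he⟩ := Finset.mem_image.1 hb
      simp only [Finset.mem_filter] at hi'
      omega
  have hdisj2 : Disjoint (if (p : ℕ) + 1 ≤ n then {(p : ℕ) + 1} else (∅ : Finset ℕ))
      ((D.filter (fun i => (p : ℕ) < i)).image (· + 1)) := by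
    rw [Finset.disjoint_left]
    intro a ha hb
    split_ifs at ha with hc
    · rw [Finset.mem_singleton] at ha
      obtain ⟨i', hi', he⟩ := Finset.mem_image.1 hb
      simp only [Finset.mem_filter] at hi'
      omega
    · simp at ha
  rw [rmaj1, Des1_ins, Finset.sum_union hdisj1, Finset.sum_union hdisj2]
  have hA : ∑ i ∈ D.filter (· < (p : ℕ)), (n + 1 - i) =
      (∑ i ∈ D.filter (· < (p : ℕ)), (n - i)) + (D.filter (· < (p : ℕ))).card := by
    rw [Finset.sum_congr rfl (g := fun i => n - i + 1) (fun i hi => by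
      simp only [Finset.mem_filter] at hi
      have := hD i hi.1
      show n + 1 - i = n - i + 1
      omega), Finset.sum_add_distrib, Finset.sum_const, smul_eq_mul, mul_one]
  have hB : ∑ i ∈ (if (p : ℕ) + 1 ≤ n then {(p : ℕ) + 1} else (∅ : Finset ℕ)), (n + 1 - i) =
      if (p : ℕ) + 1 ≤ n then n - (p : ℕ) else 0 := by
    split_ifs with hc
    · rw [Finset.sum_singleton]; omega
    · simp
  have hC : ∑ i ∈ (D.filter (fun i => (p : ℕ) < i)).image (· + 1), (n + 1 - i) =
      ∑ i ∈ D.filter (fun i => (p : ℕ) < i), (n - i) := by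
    rw [Finset.sum_image (fun a _ b _ h => by omega)]
    exact Finset.sum_congr rfl (fun i _ => by omega)
  rw [hA, hB, hC]
  have hsplit1 : ∑ i ∈ D, (n - i) = (∑ i ∈ D.filter (· < (p : ℕ)), (n - i)) +
      ∑ i ∈ D.filter (fun i => ¬ i < (p : ℕ)), (n - i) :=
    (Finset.sum_filter_add_sum_filter_not D _ _).symm
  have hsplit2 : ∑ i ∈ D.filter (fun i => ¬ i < (p : ℕ)), (n - i) =
      (∑ i ∈ D.filter (fun i => (p : ℕ) < i), (n - i)) +
        (if (p : ℕ) ∈ D then n - (p : ℕ) else 0) := by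
    have e1 : (D.filter (fun i => ¬ i < (p : ℕ))).filter (fun i => (p : ℕ) < i) =
        D.filter (fun i => (p : ℕ) < i) := by
      ext a; simp only [Finset.mem_filter]; constructor
      · rintro ⟨⟨h1, h2⟩, h3⟩; exact ⟨h1, h3⟩
      · rintro ⟨h1, h3⟩; exact ⟨⟨h1, by omega⟩, h3⟩
    have e2 : (D.filter (fun i => ¬ i < (p : ℕ))).filter (fun i => ¬ (p : ℕ) < i) =
        if (p : ℕ) ∈ D then {(p : ℕ)} else ∅ := by
      ext a; simp only [Finset.mem_filter]
      split_ifs with hpD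
      · rw [Finset.mem_singleton]
        constructor
        · rintro ⟨⟨h1, h2⟩, h3⟩; omega
        · rintro rfl; exact ⟨⟨hpD, by omega⟩, by omega⟩
      · simp only [Finset.notMem_empty, iff_false]
        rintro ⟨⟨h1, h2⟩, h3⟩
        have : a = (p : ℕ) := by omega
        exact hpD (this ▸ h1)
    have := (Finset.sum_filter_add_sum_filter_not
      (D.filter (fun i => ¬ i < (p : ℕ))) (fun i => (p : ℕ) < i) (fun i => n - i)).symm
    rw [e1, e2] at this
    rw [this]
    congr 1
    split_ifs with hpD
    · rw [Finset.sum_singleton]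
    · simp
  rw [rmaj1, ← hDdef, hsplit1, hsplit2, delta]
  have hfact : (p : ℕ) ∈ D → (p : ℕ) < n := fun h => (hD _ h).2
  by_cases hpD : (p : ℕ) ∈ D
  · have hplt : (p : ℕ) < n := hfact hpD
    rw [if_pos hpD, if_neg (show ¬((p : ℕ) + 1 ≤ n ∧ (p : ℕ) ∉ D) by tauto),
      if_pos (by omega : (p : ℕ) + 1 ≤ n)]
    ring
  · rw [if_neg hpD]
    by_cases hc : (p : ℕ) + 1 ≤ n
    · rw [if_pos hc, if_pos ⟨hc, hpD⟩]; ring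
    · rw [if_neg hc, if_neg (by tauto)]; ring


lemma delC_ins (π : Equiv.Perm (Fin n)) (p : Fin (n + 1)) (hn : 1 ≤ n) :
    delC (ins π p) = delC π + (if (p : ℕ) = 0 then 1 else 0) := by
  by_cases h : (p : ℕ) = 0
  · rw [if_pos h, delC_ins_zero π p h hn]
  · rw [if_neg h, delC_ins_pos π p (by omega), Nat.add_zero]

lemma ins_bijective :
    Function.Bijective (fun x : Equiv.Perm (Fin n) × Fin (n + 1) => ins x.1 x.2) := by
  rw [Fintype.bijective_iff_injective_and_card]
  constructor
  · rintro ⟨π, p⟩ ⟨π', p'⟩ h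
    simp only at h
    have hp : p = p' := by
      by_contra hne
      have h2 := ins_ne_lt π' p' p hne
      rw [← h, ins_self] at h2
      exact lt_irrefl _ h2
    subst hp
    suffices hπ : π = π' by rw [hπ]
    apply Equiv.ext
    intro j
    have hc : ins π p (p.succAbove j) = ins π' p (p.succAbove j) := by rw [h]
    rw [ins_succAbove, ins_succAbove] at hc
    exact Fin.castSucc_injective _ hc
  · rw [Fintype.card_prod, Fintype.card_perm, Fintype.card_perm, Fintype.card_fin,
      Fintype.card_fin, Nat.factorial_succ]
    ring

lemma sum_ins_factor {R : Type*} [CommRing R] (q t : R) (m : ℕ) (hm : 1 ≤ m)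
    (D : Finset ℕ) (hD : D ⊆ Finset.Ico 1 m) :
    ∑ p : Fin (m + 1), q ^ delta m D (p : ℕ) * t ^ (if (p : ℕ) = 0 then 1 else 0)
      = ∑ p : Fin (m + 1), q ^ (m - (p : ℕ)) * t ^ (if (p : ℕ) = 0 then 1 else 0) := by
  have h0D : 0 ∉ D := fun hc => by have := hD hc; simp only [Finset.mem_Ico] at this; omega
  have hdelta0 : delta m D 0 = m := by
    rw [delta, if_pos ⟨by omega, h0D⟩]
    have he : D.filter (· < 0) = ∅ := Finset.filter_eq_empty_iff.2 (fun _ _ => by omega)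
    rw [he]
    simp
  rw [Fin.sum_univ_succ, Fin.sum_univ_succ]
  congr 1
  · norm_num [hdelta0]
  · have hL : ∀ i : Fin m, q ^ delta m D ((i.succ : Fin (m + 1)) : ℕ) *
        t ^ (if ((i.succ : Fin (m + 1)) : ℕ) = 0 then 1 else 0)
          = q ^ delta m D ((i : ℕ) + 1) := by
      intro i
      rw [Fin.val_succ, if_neg (by omega), pow_zero, mul_one]
    have hR : ∀ i : Fin m, q ^ (m - ((i.succ : Fin (m + 1)) : ℕ)) *
        t ^ (if ((i.succ : Fin (m + 1)) : ℕ) = 0 then 1 else 0)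
          = q ^ (m - ((i : ℕ) + 1)) := by
      intro i
      rw [Fin.val_succ, if_neg (by omega), pow_zero, mul_one]
    rw [Finset.sum_congr rfl (fun i _ => hL i), Finset.sum_congr rfl (fun i _ => hR i),
      Fin.sum_univ_eq_sum_range (fun j => q ^ delta m D (j + 1)),
      Fin.sum_univ_eq_sum_range (fun j => q ^ (m - (j + 1)))]
    have himg : (Finset.range m).image (· + 1) = Finset.Icc 1 m := by
      ext a
      simp only [Finset.mem_image, Finset.mem_range, Finset.mem_Icc]
      constructor
      · rintro ⟨b, hb, rfl⟩; omega
      · rintro ⟨h1, h2⟩; exact ⟨a - 1, by omega, by omega⟩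
    have hIcc : ∑ j ∈ Finset.range m, q ^ delta m D (j + 1)
        = ∑ p ∈ Finset.Icc 1 m, q ^ delta m D p := by
      rw [← himg, Finset.sum_image (fun a _ b _ h => by omega)]
    rw [hIcc, sum_pow_delta q m D hD]
    have hrefl : ∀ j ∈ Finset.range m, q ^ (m - (j + 1)) = q ^ (m - 1 - j) :=
      fun j _ => by congr 1; omega
    rw [Finset.sum_congr rfl hrefl, Finset.sum_range_reflect (fun j => q ^ j) m]

lemma invS_small {N : ℕ} (hN : N ≤ 1) (σ : Equiv.Perm (Fin N)) : invS σ = 0 := by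
  rw [invS, Finset.card_eq_zero, Finset.filter_eq_empty_iff]
  rintro ⟨a, b⟩ -
  have ha := a.isLt
  have hb := b.isLt
  intro hx
  exact absurd (Fin.lt_def.1 hx.1) (by omega)

lemma rmaj1_small {N : ℕ} (hN : N ≤ 1) (m : ℕ) (σ : Equiv.Perm (Fin N)) : rmaj1 m σ = 0 := by
  have hd : Des1 σ = ∅ := by
    rw [Des1, Finset.Ico_eq_empty (by omega), Finset.filter_empty]
  rw [rmaj1, hd, Finset.sum_empty]

end Stmt10Aux

/-- `∑_{σ ∈ S_n} q^{ℓ_S(σ)} t^{del_S(σ)} = ∑_{σ ∈ S_n} q^{rmaj_{S_n}(σ)} t^{del_S(σ)}`. -/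
theorem stmt10 (n : ℕ) (R : Type*) [CommRing R] (q t : R) :
    ∑ σ : Equiv.Perm (Fin n), q ^ invS σ * t ^ delC σ =
      ∑ σ : Equiv.Perm (Fin n), q ^ rmaj1 n σ * t ^ delC σ := by
  induction n with
  | zero =>
    refine Finset.sum_congr rfl fun σ _ => ?_
    rw [Stmt10Aux.invS_small (by omega) σ, Stmt10Aux.rmaj1_small (by omega) 0 σ]
  | succ m ih =>
    rcases Nat.lt_or_ge m 1 with hm | hm
    · have hm0 : m = 0 := by omega
      subst hm0
      refine Finset.sum_congr rfl fun σ _ => ?_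
      rw [Stmt10Aux.invS_small (by omega) σ, Stmt10Aux.rmaj1_small (by omega) 1 σ]
    · have insbij := Stmt10Aux.ins_bijective (n := m)
      have e1 : ∑ σ : Equiv.Perm (Fin (m + 1)), q ^ invS σ * t ^ delC σ
          = (∑ π : Equiv.Perm (Fin m), q ^ invS π * t ^ delC π) *
            (∑ p : Fin (m + 1), q ^ (m - (p : ℕ)) * t ^ (if (p : ℕ) = 0 then 1 else 0)) := by
        rw [← Fintype.sum_bijective _ insbij
          (fun x : Equiv.Perm (Fin m) × Fin (m + 1) =>
            q ^ invS (Stmt10Aux.ins x.1 x.2) * t ^ delC (Stmt10Aux.ins x.1 x.2))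
          (fun σ => q ^ invS σ * t ^ delC σ) (fun x => rfl), Fintype.sum_prod_type,
          Finset.sum_mul]
        refine Finset.sum_congr rfl fun π _ => ?_
        rw [Finset.mul_sum]
        refine Finset.sum_congr rfl fun p _ => ?_
        rw [Stmt10Aux.invS_ins, Stmt10Aux.delC_ins π p hm, pow_add, pow_add]
        ring
      have e2 : ∑ σ : Equiv.Perm (Fin (m + 1)), q ^ rmaj1 (m + 1) σ * t ^ delC σ
          = (∑ π : Equiv.Perm (Fin m), q ^ rmaj1 m π * t ^ delC π) *
            (∑ p : Fin (m + 1), q ^ (m - (p : ℕ)) * t ^ (if (p : ℕ) = 0 then 1 else 0)) := by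
        rw [← Fintype.sum_bijective _ insbij
          (fun x : Equiv.Perm (Fin m) × Fin (m + 1) =>
            q ^ rmaj1 (m + 1) (Stmt10Aux.ins x.1 x.2) * t ^ delC (Stmt10Aux.ins x.1 x.2))
          (fun σ => q ^ rmaj1 (m + 1) σ * t ^ delC σ) (fun x => rfl), Fintype.sum_prod_type,
          Finset.sum_mul]
        refine Finset.sum_congr rfl fun π _ => ?_
        have hDsub : Des1 π ⊆ Finset.Ico 1 m := Finset.filter_subset _ _
        calc ∑ p : Fin (m + 1),
              q ^ rmaj1 (m + 1) (Stmt10Aux.ins π p) * t ^ delC (Stmt10Aux.ins π p)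
            = ∑ p : Fin (m + 1), (q ^ rmaj1 m π * t ^ delC π) *
              (q ^ Stmt10Aux.delta m (Des1 π) (p : ℕ) *
                t ^ (if (p : ℕ) = 0 then 1 else 0)) := by
              refine Finset.sum_congr rfl fun p _ => ?_
              rw [Stmt10Aux.rmaj1_ins, Stmt10Aux.delC_ins π p hm, pow_add, pow_add]
              ring
          _ = (q ^ rmaj1 m π * t ^ delC π) * ∑ p : Fin (m + 1),
                q ^ Stmt10Aux.delta m (Des1 π) (p : ℕ) *
                  t ^ (if (p : ℕ) = 0 then 1 else 0) := (Finset.mul_sum _ _ _).symm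
          _ = (q ^ rmaj1 m π * t ^ delC π) * ∑ p : Fin (m + 1),
                q ^ (m - (p : ℕ)) * t ^ (if (p : ℕ) = 0 then 1 else 0) := by
              rw [Stmt10Aux.sum_ins_factor q t m hm (Des1 π) hDsub]
      rw [e1, e2, ih]
end

section
/- For each 0 ≤ k ≤ n-1, the length ℓ_S and the reverse major index rmaj_{S_n} are equi-distributed over the set B_{n,k} = {σ ∈ S_n : del_S(σ) = k}: Σ_{σ ∈ B_{n,k}} q^{ℓ_S(σ)} = Σ_{σ ∈ B_{n,k}} q^{rmaj_{S_n}(σ)}. -/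
open scoped Classical
open Finset

noncomputable section EquiDist

open Equiv

variable {n : ℕ}

def insF (π : Equiv.Perm (Fin n)) (p : Fin (n+1)) : Fin (n+1) → Fin (n+1) := fun i =>
  if h : (i : ℕ) < (p : ℕ) then (π ⟨i, by have := p.isLt; omega⟩).castSucc
  else if h2 : (i : ℕ) = (p : ℕ) then Fin.last n
  else (π ⟨(i : ℕ) - 1, by have := i.isLt; omega⟩).castSucc

lemma insF_inj (π : Equiv.Perm (Fin n)) (p : Fin (n+1)) : Function.Injective (insF π p) := by
  intro i j h
  unfold insF at h
  have hi := i.isLt; have hj := j.isLt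
  split_ifs at h with h1 h2 h3 h4 h5 h6 h7 <;>
  · first
    | (apply Fin.ext; omega)
    | (exact absurd h (Fin.castSucc_lt_last _).ne)
    | (exact absurd h.symm (Fin.castSucc_lt_last _).ne)
    | (apply Fin.ext
       have := congrArg (Fin.val) (π.injective (Fin.castSucc_injective _ h))
       simp at this
       omega)

noncomputable def ins (π : Equiv.Perm (Fin n)) (p : Fin (n+1)) : Equiv.Perm (Fin (n+1)) :=
  Equiv.ofBijective (insF π p) (Finite.injective_iff_bijective.mp (insF_inj π p))

lemma ins_apply_lt (π : Equiv.Perm (Fin n)) (p : Fin (n+1)) {i : ℕ} (h : i < (p : ℕ))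
    (hi : i < n) : ins π p ⟨i, by omega⟩ = (π ⟨i, hi⟩).castSucc := by
  simp [ins, insF, h]

lemma ins_apply_self (π : Equiv.Perm (Fin n)) (p : Fin (n+1)) : ins π p p = Fin.last n := by
  simp [ins, insF]

lemma ins_apply_gt (π : Equiv.Perm (Fin n)) (p : Fin (n+1)) {i : ℕ} (h : (p : ℕ) < i)
    (hi : i < n + 1) : ins π p ⟨i, hi⟩ = (π ⟨i - 1, by omega⟩).castSucc := by
  have : ¬ (i < (p:ℕ)) := by omega
  have h2 : ¬ (i = (p:ℕ)) := by omega
  simp [ins, insF, this, h2]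

lemma ins_apply_self' (π : Equiv.Perm (Fin n)) (p : Fin (n+1)) {i : ℕ} (h : i = (p : ℕ))
    (hi : i < n + 1) : ins π p ⟨i, hi⟩ = Fin.last n := by
  have : (⟨i, hi⟩ : Fin (n+1)) = p := Fin.ext h
  rw [this, ins_apply_self]

lemma ins_bijective :
    Function.Bijective (fun x : Equiv.Perm (Fin n) × Fin (n+1) => ins x.1 x.2) := by
  rw [Fintype.bijective_iff_injective_and_card]
  constructor
  · rintro ⟨π, p⟩ ⟨π', p'⟩ h
    dsimp only at h
    simp only [Prod.mk.injEq]
    have hpp : p = p' := by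
      by_contra hne
      rcases lt_or_gt_of_ne hne with hlt | hlt
      · have h1 : ins π p p = Fin.last n := ins_apply_self π p
        have h2 : ins π' p' ⟨(p : ℕ), p.isLt⟩ =
            (π' ⟨(p : ℕ), by have := p'.isLt; omega⟩).castSucc :=
          ins_apply_lt π' p' hlt _
        rw [h] at h1
        rw [show (⟨(p : ℕ), p.isLt⟩ : Fin (n+1)) = p from rfl] at h2
        rw [h1] at h2
        exact absurd h2.symm (Fin.castSucc_lt_last _).ne
      · have h1 : ins π' p' p' = Fin.last n := ins_apply_self π' p'
        have h2 : ins π p ⟨(p' : ℕ), p'.isLt⟩ =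
            (π ⟨(p' : ℕ), by have := p.isLt; omega⟩).castSucc :=
          ins_apply_lt π p hlt _
        rw [show (⟨(p' : ℕ), p'.isLt⟩ : Fin (n+1)) = p' from rfl] at h2
        rw [h, h1] at h2
        exact absurd h2.symm (Fin.castSucc_lt_last _).ne
    refine ⟨?_, hpp⟩
    ext i
    subst hpp
    by_cases hip : (i : ℕ) < (p : ℕ)
    · have h1 := ins_apply_lt π p hip i.isLt
      have h2 := ins_apply_lt π' p hip i.isLt
      rw [show (⟨(i : ℕ), by omega⟩ : Fin (n+1)) = ⟨(i:ℕ), by have := p.isLt; omega⟩ from rfl] at h1 h2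
      rw [h] at h1
      have := Fin.castSucc_injective _ (h1.symm.trans h2)
      simpa [Fin.ext_iff] using congrArg Fin.val this
    · have hgt : (p : ℕ) < (i : ℕ) + 1 := by omega
      have hlt : (i : ℕ) + 1 < n + 1 := by omega
      have h1 := ins_apply_gt π p hgt hlt
      have h2 := ins_apply_gt π' p hgt hlt
      rw [h] at h1
      have := Fin.castSucc_injective _ (h1.symm.trans h2)
      have := congrArg Fin.val this
      simp at this
      simpa [Fin.ext_iff] using this
  · simp [Fintype.card_perm, Nat.factorial]
    ring

def psi (p : Fin (n+1)) (a : Fin n) : Fin (n+1) :=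
  if (a : ℕ) < (p : ℕ) then a.castSucc else a.succ

lemma psi_val (p : Fin (n+1)) (a : Fin n) :
    (psi p a : ℕ) = if (a : ℕ) < (p : ℕ) then (a : ℕ) else (a : ℕ) + 1 := by
  unfold psi; split_ifs <;> simp

lemma ins_psi (π : Equiv.Perm (Fin n)) (p : Fin (n+1)) (a : Fin n) :
    ins π p (psi p a) = (π a).castSucc := by
  unfold psi
  split_ifs with h
  · have := ins_apply_lt π p h a.isLt
    rwa [show (⟨(a : ℕ), by omega⟩ : Fin (n+1)) = a.castSucc from rfl, Fin.eta] at this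
  · have hgt : (p : ℕ) < (a : ℕ) + 1 := by omega
    have hlt : (a : ℕ) + 1 < n + 1 := by omega
    have := ins_apply_gt π p hgt hlt
    rw [show (⟨(a : ℕ) + 1, hlt⟩ : Fin (n+1)) = a.succ from rfl] at this
    rwa [show (⟨(a : ℕ) + 1 - 1, by omega⟩ : Fin n) = a by simp] at this

lemma psi_ne (p : Fin (n+1)) (a : Fin n) : psi p a ≠ p := by
  have := psi_val p a
  intro hc
  rw [hc] at this
  split_ifs at this <;> omega

lemma invS_ins (π : Equiv.Perm (Fin n)) (p : Fin (n+1)) :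
    invS (ins π p) = invS π + (n - (p : ℕ)) := by
  classical
  have hsplit := Finset.card_filter_add_card_filter_not
    (s := Finset.univ.filter fun x : Fin (n+1) × Fin (n+1) =>
      x.1 < x.2 ∧ ins π p x.2 < ins π p x.1)
    (p := fun x => x.1 = p)
  have hA : ((Finset.univ.filter fun x : Fin (n+1) × Fin (n+1) =>
      x.1 < x.2 ∧ ins π p x.2 < ins π p x.1).filter fun x => x.1 = p).card = n - (p : ℕ) := by
    rw [Finset.filter_filter]
    rw [show ((Finset.univ.filter fun x : Fin (n+1) × Fin (n+1) =>
        (x.1 < x.2 ∧ ins π p x.2 < ins π p x.1) ∧ x.1 = p))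
        = (Finset.Ioi p).image (fun j => (p, j)) from ?_]
    · rw [Finset.card_image_of_injective _ (by intro a b hab; simpa using hab)]
      simp [Fin.card_Ioi]
    · ext x
      simp only [Finset.mem_filter, Finset.mem_univ, true_and, Finset.mem_image,
        Finset.mem_Ioi]
      constructor
      · rintro ⟨⟨h1, h2⟩, h3⟩
        exact ⟨x.2, by rw [← h3]; exact h1, by rw [← h3]⟩
      · rintro ⟨j, hj, rfl⟩
        refine ⟨⟨hj, ?_⟩, rfl⟩
        have h1 : ins π p p = Fin.last n := ins_apply_self π p
        have h2 : ins π p ⟨(j : ℕ), j.isLt⟩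
            = (π ⟨(j : ℕ) - 1, by have := j.isLt; omega⟩).castSucc :=
          ins_apply_gt π p (by exact_mod_cast hj) j.isLt
        rw [Fin.eta] at h2
        rw [h1, h2]
        exact Fin.castSucc_lt_last _
  have hB : ((Finset.univ.filter fun x : Fin (n+1) × Fin (n+1) =>
      x.1 < x.2 ∧ ins π p x.2 < ins π p x.1).filter fun x => ¬ x.1 = p).card = invS π := by
    rw [Finset.filter_filter, eq_comm]
    unfold invS
    apply Finset.card_bij (i := fun (a : Fin n × Fin n) _ => (psi p a.1, psi p a.2))
    · rintro ⟨a, b⟩ ha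
      simp only [Finset.mem_filter, Finset.mem_univ, true_and] at ha ⊢
      refine ⟨⟨?_, ?_⟩, psi_ne p a⟩
      · have := psi_val p a; have := psi_val p b
        have hab : (a : ℕ) < (b : ℕ) := ha.1
        simp only [Fin.lt_def]
        split_ifs at * <;> omega
      · rw [ins_psi, ins_psi]
        simpa using ha.2
    · rintro ⟨a, b⟩ _ ⟨c, d⟩ _ h
      simp only [Prod.mk.injEq] at h ⊢
      have h1 := congrArg Fin.val h.1
      have h2 := congrArg Fin.val h.2
      rw [psi_val, psi_val] at h1
      rw [psi_val, psi_val] at h2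
      constructor <;> apply Fin.ext <;> split_ifs at * <;> omega
    · rintro ⟨x, y⟩ hx
      simp only [Finset.mem_filter, Finset.mem_univ, true_and] at hx
      obtain ⟨⟨hxy, hvy⟩, hx1⟩ := hx
      have hy1 : y ≠ p := by
        intro hc
        rw [hc, ins_apply_self] at hvy
        exact absurd hvy (Fin.not_lt.mpr (Fin.le_last _))
      have hx1' : (x : ℕ) ≠ (p : ℕ) := fun hc => hx1 (Fin.ext hc)
      have hy1' : (y : ℕ) ≠ (p : ℕ) := fun hc => hy1 (Fin.ext hc)
      have hxb := x.isLt; have hyb := y.isLt; have hpb := p.isLt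
      have hxv : ∃ a : Fin n, psi p a = x := by
        by_cases hc : (x : ℕ) < (p : ℕ)
        · exact ⟨⟨(x : ℕ), by omega⟩, by apply Fin.ext; rw [psi_val]; simp [hc]⟩
        · refine ⟨⟨(x : ℕ) - 1, by omega⟩, by
            apply Fin.ext; rw [psi_val]; simp; split_ifs <;> omega⟩
      have hyv : ∃ a : Fin n, psi p a = y := by
        by_cases hc : (y : ℕ) < (p : ℕ)
        · exact ⟨⟨(y : ℕ), by omega⟩, by apply Fin.ext; rw [psi_val]; simp [hc]⟩
        · refine ⟨⟨(y : ℕ) - 1, by omega⟩, by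
            apply Fin.ext; rw [psi_val]; simp; split_ifs <;> omega⟩
      obtain ⟨a, rfl⟩ := hxv
      obtain ⟨b, rfl⟩ := hyv
      refine ⟨(a, b), ?_, rfl⟩
      simp only [Finset.mem_filter, Finset.mem_univ, true_and]
      rw [ins_psi, ins_psi] at hvy
      refine ⟨?_, by simpa using hvy⟩
      have h1 := psi_val p a; have h2 := psi_val p b
      have : (psi p a : ℕ) < (psi p b : ℕ) := hxy
      simp only [Fin.lt_def]
      split_ifs at * <;> omega
  rw [Finset.filter_filter, Finset.filter_filter] at hsplit
  rw [Finset.filter_filter] at hA hB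
  have hdef : invS (ins π p) = (Finset.univ.filter fun x : Fin (n+1) × Fin (n+1) =>
      x.1 < x.2 ∧ ins π p x.2 < ins π p x.1).card := rfl
  omega

lemma mem_Des1 {m : ℕ} (τ : Equiv.Perm (Fin m)) (i : ℕ) :
    i ∈ Des1 τ ↔ 1 ≤ i ∧ ∃ h : i < m, τ ⟨i, h⟩ < τ ⟨i - 1, by omega⟩ := by
  simp only [Des1, Finset.mem_filter, Finset.mem_Ico]
  constructor
  · rintro ⟨⟨a, b⟩, h, c⟩; exact ⟨a, h, c⟩
  · rintro ⟨a, h, c⟩; exact ⟨⟨a, h⟩, h, c⟩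

lemma des_ins_iff (π : Equiv.Perm (Fin n)) (p : Fin (n+1)) (i : ℕ) :
    i ∈ Des1 (ins π p) ↔
      (i < (p : ℕ) ∧ i ∈ Des1 π) ∨ (i = (p : ℕ) + 1 ∧ i ≤ n) ∨
        ((p : ℕ) + 1 < i ∧ i - 1 ∈ Des1 π) := by
  have hpb := p.isLt
  rw [mem_Des1]
  constructor
  · rintro ⟨h1, hb, hlt⟩
    rcases Nat.lt_trichotomy i (p : ℕ) with hc | hc | hc
    · left
      refine ⟨hc, (mem_Des1 π i).mpr ⟨h1, by omega, ?_⟩⟩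
      rw [ins_apply_lt π p hc (by omega), ins_apply_lt π p (by omega) (by omega : i - 1 < n)]
        at hlt
      exact_mod_cast hlt
    · exfalso
      rw [ins_apply_self' π p hc hb] at hlt
      exact absurd hlt (Fin.not_lt.mpr (Fin.le_last _))
    · rcases Nat.lt_or_ge ((p : ℕ) + 1) i with hc2 | hc2
      · right; right
        refine ⟨hc2, (mem_Des1 π (i-1)).mpr ⟨by omega, by omega, ?_⟩⟩
        rw [ins_apply_gt π p hc hb, ins_apply_gt π p (by omega) (by omega : i - 1 < n + 1)]
          at hlt
        have : (π ⟨i - 1, by omega⟩ : Fin n) < π ⟨i - 1 - 1, by omega⟩ := by exact_mod_cast hlt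
        convert this using 3
      · right; left; omega
  · rintro (⟨hc, hd⟩ | ⟨hc, hd⟩ | ⟨hc, hd⟩)
    · rw [mem_Des1] at hd
      obtain ⟨h1, hb, hlt⟩ := hd
      refine ⟨h1, by omega, ?_⟩
      rw [ins_apply_lt π p hc (by omega), ins_apply_lt π p (by omega) (by omega : i - 1 < n)]
      exact_mod_cast hlt
    · subst hc
      refine ⟨by omega, by omega, ?_⟩
      rw [ins_apply_gt π p (by omega) (by omega), ins_apply_self' π p (by omega) (by omega)]
      exact Fin.castSucc_lt_last _
    · rw [mem_Des1] at hd
      obtain ⟨h1, hb, hlt⟩ := hd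
      refine ⟨by omega, by omega, ?_⟩
      rw [ins_apply_gt π p (by omega) (by omega), ins_apply_gt π p (by omega) (by omega)]
      have : ((π ⟨i - 1, by omega⟩).castSucc : Fin (n+1)) < (π ⟨i - 1 - 1, by omega⟩).castSucc
          ↔ (π ⟨i - 1, by omega⟩ : Fin n) < π ⟨i - 1 - 1, by omega⟩ := by
        exact Fin.castSucc_lt_castSucc_iff
      rw [show (⟨i - 1 - 1, by omega⟩ : Fin n) = ⟨i - 1 - 1, by omega⟩ from rfl] at this
      refine this.mpr ?_
      convert hlt using 3

def dl (π : Equiv.Perm (Fin n)) (p : ℕ) : ℕ :=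
  ((Des1 π).filter (fun i => i < p)).card + (if p ∈ Des1 π then 0 else n - p)

lemma Des1_bounds {m : ℕ} (τ : Equiv.Perm (Fin m)) {i : ℕ} (h : i ∈ Des1 τ) :
    1 ≤ i ∧ i < m := by
  rw [mem_Des1] at h
  exact ⟨h.1, h.2.1⟩

lemma Des1_ins (π : Equiv.Perm (Fin n)) (p : Fin (n+1)) :
    Des1 (ins π p) =
      ((Des1 π).filter (fun i => i < (p : ℕ))) ∪
        ((((Des1 π).filter (fun i => (p : ℕ) < i)).image (· + 1)) ∪
          (if (p : ℕ) < n then {(p : ℕ) + 1} else ∅)) := by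
  have hpb := p.isLt
  ext j
  simp only [Finset.mem_union, Finset.mem_filter, Finset.mem_image, des_ins_iff]
  constructor
  · rintro (⟨hc, hd⟩ | ⟨hc, hd⟩ | ⟨hc, hd⟩)
    · exact Or.inl ⟨hd, hc⟩
    · right; right
      have : (p : ℕ) < n := by omega
      simp [this, hc]
    · right; left
      exact ⟨j - 1, ⟨hd, by omega⟩, by omega⟩
  · rintro (⟨hd, hc⟩ | ⟨i, ⟨hd, hc⟩, rfl⟩ | hd)
    · exact Or.inl ⟨hc, hd⟩
    · right; right
      refine ⟨by omega, by simpa using hd⟩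
    · split_ifs at hd with hn
      · simp only [Finset.mem_singleton] at hd
        right; left; omega
      · simp at hd
lemma rmaj_ins (π : Equiv.Perm (Fin n)) (p : Fin (n+1)) :
    rmaj1 (n+1) (ins π p) = rmaj1 n π + dl π (p : ℕ) := by
  have hpb := p.isLt
  unfold rmaj1 dl
  rw [Des1_ins]
  have dinner : Disjoint (((Des1 π).filter (fun i => (p : ℕ) < i)).image (· + 1))
      (if (p : ℕ) < n then ({(p : ℕ) + 1} : Finset ℕ) else ∅) := by
    simp only [Finset.disjoint_left, Finset.mem_image, Finset.mem_filter]
    rintro a ⟨i, ⟨_, hi⟩, rfl⟩ ha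
    split_ifs at ha with h
    · simp only [Finset.mem_singleton] at ha; omega
    · simp at ha
  have douter : Disjoint ((Des1 π).filter (fun i => i < (p : ℕ)))
      ((((Des1 π).filter (fun i => (p : ℕ) < i)).image (· + 1)) ∪
        (if (p : ℕ) < n then ({(p : ℕ) + 1} : Finset ℕ) else ∅)) := by
    simp only [Finset.disjoint_left, Finset.mem_union, Finset.mem_image, Finset.mem_filter]
    rintro a ⟨_, ha⟩ (⟨i, ⟨_, hi⟩, rfl⟩ | hb)
    · omega
    · split_ifs at hb with h
      · simp only [Finset.mem_singleton] at hb; omega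
      · simp at hb
  rw [Finset.sum_union douter, Finset.sum_union dinner]
  rw [Finset.sum_image (by intro a _ b _ h; simp only at h; omega)]
  have hsplit : ∑ i ∈ Des1 π, (n - i) =
      (∑ i ∈ (Des1 π).filter (fun i => i < (p : ℕ)), (n - i))
        + (∑ i ∈ (Des1 π).filter (fun i => (p : ℕ) < i), (n - i))
        + (if (p : ℕ) ∈ Des1 π then n - p else 0) := by
    rw [← Finset.sum_filter_add_sum_filter_not (Des1 π) (fun i => i < (p : ℕ))]
    have h2 : (Des1 π).filter (fun i => ¬ i < (p : ℕ))
        = ((Des1 π).filter (fun i => (p : ℕ) < i)) ∪ ((Des1 π).filter (fun i => i = (p : ℕ))) := by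
      ext i
      simp only [Finset.mem_filter, Finset.mem_union]
      constructor
      · rintro ⟨hm, hn⟩
        rcases Nat.lt_or_ge (p : ℕ) i with h | h
        · exact Or.inl ⟨hm, h⟩
        · exact Or.inr ⟨hm, by omega⟩
      · rintro (⟨hm, hn⟩ | ⟨hm, hn⟩) <;> exact ⟨hm, by omega⟩
    rw [h2, Finset.sum_union (by
      simp only [Finset.disjoint_left, Finset.mem_filter]
      rintro a ⟨_, h1⟩ ⟨_, h2⟩; omega)]
    have h3 : ∑ i ∈ (Des1 π).filter (fun i => i = (p : ℕ)), (n - i)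
        = if (p : ℕ) ∈ Des1 π then n - p else 0 := by
      split_ifs with hp
      · rw [show (Des1 π).filter (fun i => i = (p : ℕ)) = {(p : ℕ)} from ?_]
        · simp
        · ext i
          simp only [Finset.mem_filter, Finset.mem_singleton]
          exact ⟨fun h => h.2, fun h => ⟨h ▸ hp, h⟩⟩
      · rw [show (Des1 π).filter (fun i => i = (p : ℕ)) = ∅ from ?_]
        · simp
        · ext i
          simp only [Finset.mem_filter, Finset.mem_singleton, Finset.notMem_empty,
            iff_false, not_and]
          rintro hm rfl; exact hp hm
    rw [h3]
    ring
  have hA : ∑ i ∈ (Des1 π).filter (fun i => i < (p : ℕ)), (n + 1 - i)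
      = (∑ i ∈ (Des1 π).filter (fun i => i < (p : ℕ)), (n - i))
        + ((Des1 π).filter (fun i => i < (p : ℕ))).card := by
    rw [Finset.card_eq_sum_ones, ← Finset.sum_add_distrib]
    apply Finset.sum_congr rfl
    intro i hi
    simp only [Finset.mem_filter] at hi
    have := Des1_bounds π hi.1
    omega
  have hB : ∑ i ∈ (Des1 π).filter (fun i => (p : ℕ) < i), (n + 1 - (i + 1))
      = ∑ i ∈ (Des1 π).filter (fun i => (p : ℕ) < i), (n - i) := by
    apply Finset.sum_congr rfl
    intro i _
    omega
  have hC : ∑ i ∈ (if (p : ℕ) < n then ({(p : ℕ) + 1} : Finset ℕ) else ∅), (n + 1 - i)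
      = n - (p : ℕ) := by
    split_ifs with h
    · simp
    · simp; omega
  rw [hA, hB, hC, hsplit]
  by_cases hp : (p : ℕ) ∈ Des1 π <;> simp [hp] <;> omega

lemma mem_DelSet {m : ℕ} (τ : Equiv.Perm (Fin m)) (i : ℕ) :
    i ∈ DelSet τ ↔ (2 ≤ i ∧ i ≤ m) ∧
      ∃ h : i - 1 < m, ∀ j : Fin m, (j : ℕ) < i - 1 → τ ⟨i - 1, h⟩ < τ j := by
  simp only [DelSet, Finset.mem_filter, Finset.mem_Icc]

lemma del_ins_iff (π : Equiv.Perm (Fin n)) (p : Fin (n+1)) (i : ℕ) :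
    i ∈ DelSet (ins π p) ↔
      (i ≤ (p : ℕ) ∧ i ∈ DelSet π) ∨ ((p : ℕ) + 1 < i ∧ i - 1 ∈ DelSet π) ∨
        ((p : ℕ) = 0 ∧ i = 2 ∧ 1 ≤ n) := by
  have hpb := p.isLt
  rw [mem_DelSet]
  constructor
  · rintro ⟨⟨h2, hle⟩, hb, hall⟩
    rcases Nat.lt_trichotomy (i - 1) (p : ℕ) with hc | hc | hc
    · -- i ≤ p : comes from DelSet π
      left
      refine ⟨by omega, (mem_DelSet π i).mpr ⟨⟨h2, by omega⟩, by omega, ?_⟩⟩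
      intro j hj
      have := hall ⟨(j : ℕ), by omega⟩ (by simpa using hj)
      rw [ins_apply_lt π p hc (by omega), ins_apply_lt π p (by omega) (by omega : (j:ℕ) < n)]
        at this
      rw [Fin.eta] at this
      exact_mod_cast this
    · -- i - 1 = p : impossible
      exfalso
      have := hall ⟨0, by omega⟩ (by simp; omega)
      rw [ins_apply_self' π p hc (by omega)] at this
      exact absurd this (Fin.not_lt.mpr (Fin.le_last _))
    · -- i - 1 > p
      by_cases hi3 : 3 ≤ i
      · right; left
        refine ⟨by omega, (mem_DelSet π (i-1)).mpr ⟨⟨by omega, by omega⟩, by omega, ?_⟩⟩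
        intro j hj
        by_cases hjp : (j : ℕ) < (p : ℕ)
        · have := hall ⟨(j : ℕ), by omega⟩ (by simp; omega)
          rw [ins_apply_gt π p hc (by omega), ins_apply_lt π p hjp (by omega : (j:ℕ) < n)]
            at this
          rw [Fin.eta] at this
          have h' : (π ⟨i - 1 - 1, by omega⟩ : Fin n) < π j := by exact_mod_cast this
          convert h' using 3
        · have := hall ⟨(j : ℕ) + 1, by omega⟩ (by simp; omega)
          rw [ins_apply_gt π p hc (by omega),
            ins_apply_gt π p (by omega : (p:ℕ) < (j:ℕ)+1) (by omega)] at this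
          rw [show (⟨(j:ℕ)+1-1, by omega⟩ : Fin n) = j by simp] at this
          have h' : (π ⟨i - 1 - 1, by omega⟩ : Fin n) < π j := by exact_mod_cast this
          convert h' using 3
      · right; right
        have : i = 2 := by omega
        refine ⟨by omega, this, by omega⟩
  · rintro (⟨hle, hd⟩ | ⟨hc, hd⟩ | ⟨hp0, hi2, hn1⟩)
    · rw [mem_DelSet] at hd
      obtain ⟨⟨h2, hm⟩, hb, hall⟩ := hd
      refine ⟨⟨h2, by omega⟩, by omega, ?_⟩
      rintro ⟨jv, hjv⟩ hj
      simp only at hj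
      have hjp : jv < (p : ℕ) := by omega
      rw [ins_apply_lt π p (by omega) (by omega : i - 1 < n)]
      rw [ins_apply_lt π p hjp (by omega : jv < n)]
      have := hall ⟨jv, by omega⟩ (by simpa using hj)
      have h' : (π ⟨i-1, by omega⟩ : Fin n) < π ⟨jv, by omega⟩ := by convert this using 3
      exact_mod_cast h'
    · rw [mem_DelSet] at hd
      obtain ⟨⟨h2, hm⟩, hb, hall⟩ := hd
      refine ⟨⟨by omega, by omega⟩, by omega, ?_⟩
      rintro ⟨jv, hjv⟩ hj
      simp only at hj
      rw [ins_apply_gt π p (by omega : (p:ℕ) < i - 1) (by omega)]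
      rcases Nat.lt_trichotomy jv (p : ℕ) with hjc | hjc | hjc
      · rw [ins_apply_lt π p hjc (by omega : jv < n)]
        have := hall ⟨jv, by omega⟩ (by simp; omega)
        have h' : (π ⟨i-1-1, by omega⟩ : Fin n) < π ⟨jv, by omega⟩ := by convert this using 3
        exact_mod_cast h'
      · rw [ins_apply_self' π p hjc (by omega)]
        exact Fin.castSucc_lt_last _
      · rw [ins_apply_gt π p hjc (by omega)]
        have := hall ⟨jv - 1, by omega⟩ (by simp; omega)
        have h' : (π ⟨i-1-1, by omega⟩ : Fin n) < π ⟨jv-1, by omega⟩ := by convert this using 3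
        exact_mod_cast h'
    · subst hi2
      refine ⟨⟨by omega, by omega⟩, by omega, ?_⟩
      rintro ⟨jv, hjv⟩ hj
      simp only at hj
      have hj0 : jv = 0 := by omega
      subst hj0
      rw [ins_apply_self' π p (i := 0) (by omega) (by omega)]
      rw [ins_apply_gt π p (i := 2 - 1) (by omega) (by omega)]
      exact Fin.castSucc_lt_last _

lemma DelSet_bounds {m : ℕ} (τ : Equiv.Perm (Fin m)) {i : ℕ} (h : i ∈ DelSet τ) :
    2 ≤ i ∧ i ≤ m := ((mem_DelSet τ i).mp h).1

lemma delC_ins (π : Equiv.Perm (Fin n)) (p : Fin (n+1)) (hn : 1 ≤ n) :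
    delC (ins π p) = delC π + (if (p : ℕ) = 0 then 1 else 0) := by
  have hpb := p.isLt
  unfold delC
  have hset : DelSet (ins π p) =
      ((DelSet π).filter (fun i => i ≤ (p : ℕ))) ∪
        ((((DelSet π).filter (fun i => (p : ℕ) < i)).image (· + 1)) ∪
          (if (p : ℕ) = 0 then {2} else ∅)) := by
    ext j
    simp only [Finset.mem_union, Finset.mem_filter, Finset.mem_image, del_ins_iff]
    constructor
    · rintro (⟨hc, hd⟩ | ⟨hc, hd⟩ | ⟨hc, hd, hd2⟩)
      · exact Or.inl ⟨hd, hc⟩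
      · right; left
        refine ⟨j - 1, ⟨hd, by omega⟩, by omega⟩
      · right; right; simp [hc, hd]
    · rintro (⟨hd, hc⟩ | ⟨i, ⟨hd, hc⟩, rfl⟩ | hd)
      · exact Or.inl ⟨hc, hd⟩
      · right; left
        exact ⟨by omega, by simpa using hd⟩
      · split_ifs at hd with h0
        · simp only [Finset.mem_singleton] at hd
          right; right; exact ⟨h0, hd, hn⟩
        · simp at hd
  rw [hset]
  have dinner : Disjoint (((DelSet π).filter (fun i => (p : ℕ) < i)).image (· + 1))
      (if (p : ℕ) = 0 then ({2} : Finset ℕ) else ∅) := by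
    simp only [Finset.disjoint_left, Finset.mem_image, Finset.mem_filter]
    rintro a ⟨i, ⟨hi, _⟩, rfl⟩ ha
    split_ifs at ha with h
    · simp only [Finset.mem_singleton] at ha
      have := DelSet_bounds π hi
      omega
    · simp at ha
  have douter : Disjoint ((DelSet π).filter (fun i => i ≤ (p : ℕ)))
      ((((DelSet π).filter (fun i => (p : ℕ) < i)).image (· + 1)) ∪
        (if (p : ℕ) = 0 then ({2} : Finset ℕ) else ∅)) := by
    simp only [Finset.disjoint_left, Finset.mem_union, Finset.mem_image, Finset.mem_filter]
    rintro a ⟨ha1, ha2⟩ (⟨i, ⟨hi, hi2⟩, rfl⟩ | hb)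
    · omega
    · split_ifs at hb with h
      · simp only [Finset.mem_singleton] at hb
        have := DelSet_bounds π ha1
        omega
      · simp at hb
  rw [Finset.card_union_of_disjoint douter, Finset.card_union_of_disjoint dinner]
  rw [Finset.card_image_of_injective _ (by intro a b hab; simpa using hab)]
  have hsplit : (DelSet π).card =
      ((DelSet π).filter (fun i => i ≤ (p : ℕ))).card
        + ((DelSet π).filter (fun i => (p : ℕ) < i)).card := by
    rw [← Finset.card_filter_add_card_filter_not (s := DelSet π)
      (p := fun i => i ≤ (p : ℕ))]
    congr 1
    apply congrArg
    ext x
    simp only [Finset.mem_filter]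
    constructor
    · rintro ⟨h1, h2⟩; exact ⟨h1, by omega⟩
    · rintro ⟨h1, h2⟩; exact ⟨h1, by omega⟩
  split_ifs with h0 <;> simp <;> omega

lemma dl_zero (π : Equiv.Perm (Fin n)) : dl π 0 = n := by
  unfold dl
  have h1 : (Des1 π).filter (fun i => i < 0) = ∅ := by
    ext i; simp
  have h2 : (0 : ℕ) ∉ Des1 π := fun hc => by have := Des1_bounds π hc; omega
  simp [h1, h2]

lemma cfun_le (π : Equiv.Perm (Fin n)) (p : ℕ) :
    ((Des1 π).filter (fun i => i < p)).card ≤ p := by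
  calc ((Des1 π).filter (fun i => i < p)).card ≤ (Finset.range p).card := by
        apply Finset.card_le_card
        intro i hi
        simp only [Finset.mem_filter] at hi
        simpa using hi.2
    _ = p := Finset.card_range p

lemma dl_le (π : Equiv.Perm (Fin n)) {p : ℕ} (hp : p ≤ n) : dl π p ≤ n := by
  unfold dl
  have h1 := cfun_le π p
  split_ifs with h
  · omega
  · omega

lemma cfun_mono (π : Equiv.Perm (Fin n)) {p q : ℕ} (h : p ≤ q) :
    ((Des1 π).filter (fun i => i < p)).card ≤ ((Des1 π).filter (fun i => i < q)).card := by
  apply Finset.card_le_card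
  intro i hi
  simp only [Finset.mem_filter] at hi ⊢
  exact ⟨hi.1, by omega⟩

lemma cfun_lt (π : Equiv.Perm (Fin n)) {p q : ℕ} (hp : p ∈ Des1 π) (h : p < q) :
    ((Des1 π).filter (fun i => i < p)).card < ((Des1 π).filter (fun i => i < q)).card := by
  apply Finset.card_lt_card
  constructor
  · intro i hi
    simp only [Finset.mem_filter] at hi ⊢
    exact ⟨hi.1, by omega⟩
  · intro hs
    have : p ∈ (Des1 π).filter (fun i => i < q) := Finset.mem_filter.mpr ⟨hp, h⟩
    have := hs this
    simp only [Finset.mem_filter] at this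
    omega

lemma cfun_gap (π : Equiv.Perm (Fin n)) {p q : ℕ} (hp : p ∉ Des1 π) (h : p < q) :
    ((Des1 π).filter (fun i => i < q)).card
      ≤ ((Des1 π).filter (fun i => i < p)).card + (q - (p + 1)) := by
  calc ((Des1 π).filter (fun i => i < q)).card
      ≤ (((Des1 π).filter (fun i => i < p)) ∪ Finset.Ico (p+1) q).card := by
        apply Finset.card_le_card
        intro i hi
        simp only [Finset.mem_filter] at hi
        simp only [Finset.mem_union, Finset.mem_filter, Finset.mem_Ico]
        rcases Nat.lt_or_ge i p with hc | hc
        · exact Or.inl ⟨hi.1, hc⟩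
        · right
          refine ⟨?_, hi.2⟩
          rcases Nat.eq_or_lt_of_le hc with rfl | hc2
          · exact absurd hi.1 hp
          · omega
    _ ≤ _ := by
        refine le_trans (Finset.card_union_le _ _) ?_
        simp [Nat.card_Ico]

lemma dl_inj (π : Equiv.Perm (Fin n)) {p q : ℕ} (hpq : p < q) (hq : q ≤ n) :
    dl π p ≠ dl π q := by
  unfold dl
  have hmono := cfun_mono π hpq.le
  by_cases hp : p ∈ Des1 π <;> by_cases hqd : q ∈ Des1 π <;> simp only [hp, hqd, if_pos, if_neg,
    if_true, if_false, reduceIte]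
  · have := cfun_lt π hp hpq
    omega
  · have := cfun_lt π hp hpq
    omega
  · have := cfun_gap π hp hpq
    have hqb := Des1_bounds π hqd
    omega
  · have := cfun_gap π hp hpq
    omega

lemma dl_image (π : Equiv.Perm (Fin n)) :
    (Finset.range (n+1)).image (dl π) = Finset.range (n+1) := by
  apply Finset.eq_of_subset_of_card_le
  · intro j hj
    simp only [Finset.mem_image, Finset.mem_range] at hj ⊢
    obtain ⟨p, hp, rfl⟩ := hj
    have := dl_le π (by omega : p ≤ n)
    omega
  · rw [Finset.card_image_of_injOn]
    intro a ha b hb hab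
    simp only [Finset.coe_range, Set.mem_Iio] at ha hb
    by_contra hne
    rcases Nat.lt_or_ge a b with hc | hc
    · exact dl_inj π hc (by omega) hab
    · exact dl_inj π (by omega : b < a) (by omega) hab.symm

section Ring
variable {R : Type*} [CommRing R] (q : R)

lemma sum_pow_dl (π : Equiv.Perm (Fin n)) :
    ∑ p ∈ Finset.range (n+1), q ^ (dl π p) = ∑ j ∈ Finset.range (n+1), q ^ j := by
  conv_rhs => rw [← dl_image π]
  rw [Finset.sum_image]
  intro a ha b hb hab
  simp only [Finset.mem_coe, Finset.mem_range] at ha hb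
  by_contra hne
  rcases Nat.lt_or_ge a b with hc | hc
  · exact dl_inj π hc (by omega) hab
  · exact dl_inj π (by omega : b < a) (by omega) hab.symm

lemma sum_pow_dl' (π : Equiv.Perm (Fin n)) :
    ∑ p ∈ Finset.Ico 1 (n+1), q ^ (dl π p) = ∑ j ∈ Finset.range n, q ^ j := by
  have h0 := sum_pow_dl q π
  have hL : ∑ p ∈ Finset.range (n+1), q ^ (dl π p)
      = q ^ (dl π 0) + ∑ p ∈ Finset.Ico 1 (n+1), q ^ (dl π p) := by
    rw [Finset.range_eq_Ico, Finset.sum_eq_sum_Ico_succ_bot (by omega)]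
  have hR : ∑ j ∈ Finset.range (n+1), q ^ j = ∑ j ∈ Finset.range n, q ^ j + q ^ n :=
    Finset.sum_range_succ _ _
  rw [hL, hR, dl_zero, add_comm (∑ j ∈ Finset.range n, q ^ j) (q ^ n)] at h0
  exact add_left_cancel h0

lemma sum_pow_sub : ∑ p ∈ Finset.Ico 1 (n+1), q ^ (n - p) = ∑ j ∈ Finset.range n, q ^ j := by
  have himg : (Finset.Ico 1 (n+1)).image (fun p => n - p) = Finset.range n := by
    ext j
    simp only [Finset.mem_image, Finset.mem_range, Finset.mem_Ico]
    constructor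
    · rintro ⟨p, ⟨h1, h2⟩, rfl⟩; omega
    · intro hj; exact ⟨n - j, by omega, by omega⟩
  conv_rhs => rw [← himg]
  rw [Finset.sum_image]
  intro a ha b hb hab
  simp only [Finset.mem_coe, Finset.mem_Ico] at ha hb hab
  omega

lemma step_generic (hn : 1 ≤ n) (k : ℕ)
    (f : Equiv.Perm (Fin (n+1)) → ℕ) (g : Equiv.Perm (Fin n) → ℕ)
    (incr : Equiv.Perm (Fin n) → ℕ → ℕ)
    (hins : ∀ (π : Equiv.Perm (Fin n)) (p : Fin (n+1)), f (ins π p) = g π + incr π (p : ℕ))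
    (hzero : ∀ π, incr π 0 = n)
    (hsum : ∀ π, ∑ p ∈ Finset.Ico 1 (n+1), q ^ (incr π p) = ∑ j ∈ Finset.range n, q ^ j) :
    (∑ σ : Equiv.Perm (Fin (n+1)), if delC σ = k then q ^ (f σ) else 0)
      = q ^ n * (∑ π : Equiv.Perm (Fin n), if delC π + 1 = k then q ^ (g π) else 0)
        + (∑ π : Equiv.Perm (Fin n), if delC π = k then q ^ (g π) else 0)
          * (∑ j ∈ Finset.range n, q ^ j) := by
  have hbij := Fintype.sum_bijective _ ins_bijective
    (fun x : Equiv.Perm (Fin n) × Fin (n+1) =>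
      if delC (ins x.1 x.2) = k then q ^ (f (ins x.1 x.2)) else 0)
    (fun σ => if delC σ = k then q ^ (f σ) else 0)
    (fun x => rfl)
  rw [← hbij, Fintype.sum_prod_type]
  have inner : ∀ π : Equiv.Perm (Fin n),
      (∑ p : Fin (n+1), if delC (ins π p) = k then q ^ (f (ins π p)) else 0)
        = q ^ n * (if delC π + 1 = k then q ^ (g π) else 0)
          + (if delC π = k then q ^ (g π) else 0) * (∑ j ∈ Finset.range n, q ^ j) := by
    intro π
    set F : ℕ → R := fun v => if v = 0 then (if delC π + 1 = k then q ^ (g π) * q ^ n else 0)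
        else (if delC π = k then q ^ (g π) * q ^ (incr π v) else 0) with hF
    have hterm : ∀ p : Fin (n+1),
        (if delC (ins π p) = k then q ^ (f (ins π p)) else 0) = F ((p : ℕ)) := by
      intro p
      rw [delC_ins π p hn, hins, hF]
      by_cases h0 : (p : ℕ) = 0
      · simp [h0, hzero π, pow_add]
      · simp [h0, pow_add]
    rw [Finset.sum_congr rfl (fun p _ => hterm p)]
    rw [Fin.sum_univ_eq_sum_range F]
    rw [Finset.range_eq_Ico, Finset.sum_eq_sum_Ico_succ_bot (by omega)]
    have hF0 : F 0 = (if delC π + 1 = k then q ^ (g π) * q ^ n else 0) := by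
      simp only [hF]
      simp
    have htail : (∑ v ∈ Finset.Ico 1 (n+1), F v)
        = ∑ v ∈ Finset.Ico 1 (n+1), (if delC π = k then q ^ (g π) * q ^ (incr π v) else 0) := by
      apply Finset.sum_congr rfl
      intro v hv
      simp only [Finset.mem_Ico] at hv
      simp only [hF]
      rw [if_neg (by omega)]
    rw [hF0, htail]
    by_cases hd : delC π = k <;> by_cases hd1 : delC π + 1 = k
    · omega
    · rw [if_neg hd1, if_neg hd1]
      have hc : ∀ v ∈ Finset.Ico 1 (n+1),
          (if delC π = k then q ^ (g π) * q ^ (incr π v) else 0)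
            = q ^ (g π) * q ^ (incr π v) := fun v _ => if_pos hd
      rw [Finset.sum_congr rfl hc, ← Finset.mul_sum, hsum π, if_pos hd, Finset.range_eq_Ico]
      ring
    · rw [if_pos hd1, if_pos hd1, if_neg hd]
      have hc : ∀ v ∈ Finset.Ico 1 (n+1),
          (if delC π = k then q ^ (g π) * q ^ (incr π v) else 0) = 0 := fun v _ => if_neg hd
      rw [Finset.sum_congr rfl hc, Finset.sum_const_zero]
      ring
    · rw [if_neg hd1, if_neg hd1, if_neg hd]
      have hc : ∀ v ∈ Finset.Ico 1 (n+1),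
          (if delC π = k then q ^ (g π) * q ^ (incr π v) else 0) = 0 := fun v _ => if_neg hd
      rw [Finset.sum_congr rfl hc, Finset.sum_const_zero]
      ring
  rw [Finset.sum_congr rfl (fun π _ => inner π)]
  rw [Finset.sum_add_distrib, ← Finset.mul_sum, ← Finset.sum_mul]

lemma invS_small (hn : n ≤ 1) (σ : Equiv.Perm (Fin n)) : invS σ = 0 := by
  unfold invS
  rw [Finset.card_eq_zero]
  ext x
  simp only [Finset.mem_filter, Finset.mem_univ, true_and, Finset.notMem_empty, iff_false,
    not_and]
  intro hlt
  have h1 := x.1.isLt; have h2 := x.2.isLt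
  have : (x.1 : ℕ) < (x.2 : ℕ) := hlt
  omega

lemma rmaj_small (hn : n ≤ 1) (m : ℕ) (σ : Equiv.Perm (Fin n)) : rmaj1 m σ = 0 := by
  unfold rmaj1
  have : Des1 σ = ∅ := by
    ext i
    simp only [Finset.notMem_empty, iff_false]
    intro hc
    have := Des1_bounds σ hc
    omega
  simp [this]

lemma equidist (n k : ℕ) :
    (∑ σ : Equiv.Perm (Fin n), if delC σ = k then q ^ (invS σ) else 0)
      = ∑ σ : Equiv.Perm (Fin n), if delC σ = k then q ^ (rmaj1 n σ) else 0 := by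
  induction n generalizing k with
  | zero =>
    apply Finset.sum_congr rfl
    intro σ _
    rw [invS_small (by omega) σ, rmaj_small (by omega) 0 σ]
  | succ m ih =>
    rcases Nat.eq_zero_or_pos m with rfl | hm
    · apply Finset.sum_congr rfl
      intro σ _
      rw [invS_small (by omega) σ, rmaj_small (by omega) 1 σ]
    · rw [step_generic q hm k invS invS (fun π v => m - v)
        (fun π p => invS_ins π p) (fun π => by show m - 0 = m; omega) (fun π => sum_pow_sub q)]
      rw [step_generic q hm k (rmaj1 (m+1)) (rmaj1 m) (fun π v => dl π v)
        (fun π p => rmaj_ins π p) (fun π => dl_zero π) (fun π => sum_pow_dl' q π)]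
      rw [ih k]
      congr 1
      congr 1
      rcases Nat.eq_zero_or_pos k with rfl | hk
      · apply Finset.sum_congr rfl
        intro π _
        rw [if_neg (by omega), if_neg (by omega)]
      · obtain ⟨k', rfl⟩ : ∃ k', k = k' + 1 := ⟨k - 1, by omega⟩
        have h1 : ∀ (h : Equiv.Perm (Fin m) → ℕ),
            (∑ π : Equiv.Perm (Fin m), if delC π + 1 = k' + 1 then q ^ (h π) else 0)
              = ∑ π : Equiv.Perm (Fin m), if delC π = k' then q ^ (h π) else 0 := by
          intro h
          apply Finset.sum_congr rfl
          intro π _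
          congr 1
          simp
        rw [h1, h1, ih k']

end Ring


end EquiDist

/-- `ℓ_S` and `rmaj_{S_n}` are equi-distributed on `{σ ∈ S_n : del_S(σ) = k}`. -/
theorem stmt11 (n k : ℕ) (hk : k ≤ n - 1) (R : Type*) [CommRing R] (q : R) :
    ∑ σ ∈ Finset.univ.filter (fun σ : Equiv.Perm (Fin n) => delC σ = k), q ^ invS σ =
      ∑ σ ∈ Finset.univ.filter (fun σ : Equiv.Perm (Fin n) => delC σ = k), q ^ rmaj1 n σ := by
  rw [Finset.sum_filter, Finset.sum_filter]
  exact equidist q n k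
end
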